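/- Every sequent provable in L◇ is a substitution instance of a thin indexed sequent provable in the multimodal calculus L◇_m. That is, if Γ ⇒ C is provable in L◇, then there exist an indexed sequent Γ' ⇒ C' provable in L◇_m with σ_i(Γ' ⇒ C') ≤ 2 and τ_i(Γ' ⇒ C') ≤ 2 for each i, and a function θ from primitive types to primitive types, such that Γ ⇒ C is obtained from Γ' ⇒ C' by replacing each p_i with θ(p_i) and erasing all indices from brackets and modalities. -/

import Mathlib

/-- Types of the bracketed Lambek calculus. -/
inductive PTy where
  | prim : ℕ → PTy
  | ldiv : PTy → PTy → PTy   -- ldiv A B = A \ B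
  | rdiv : PTy → PTy → PTy   -- rdiv B A = B / A
  | mul  : PTy → PTy → PTy
  | dia  : PTy → PTy
  | box  : PTy → PTy
deriving DecidableEq

/-- Type trees: leaves labeled by types, internal nodes are brackets. -/
inductive PTree where
  | leaf : PTy → PTree
  | node : List PTree → PTree

abbrev PHedge := List PTree

/-- Contexts: a hedge with one distinguished hole. -/
inductive PCtx where
  | hole : PHedge → PHedge → PCtx
  | brk  : PCtx → PHedge → PHedge → PCtx

/-- Substitution of a hedge for the hole of a context. -/
def PCtx.plug : PCtx → PHedge → PHedge
  | .hole pre post, D => pre ++ D ++ post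
  | .brk c pre post, D => pre ++ (PTree.node (c.plug D) :: post)

/-- All primitive types occurring in the type belong to `B`. -/
def PTy.over (B : Finset ℕ) : PTy → Prop
  | .prim p => p ∈ B
  | .ldiv A C => A.over B ∧ C.over B
  | .rdiv C A => C.over B ∧ A.over B
  | .mul A C => A.over B ∧ C.over B
  | .dia A => A.over B
  | .box A => A.over B

/-- Length of a type. -/
def lenP : PTy → ℕ
  | .prim _ => 1
  | .ldiv A B => lenP A + lenP B
  | .rdiv B A => lenP B + lenP A
  | .mul A B => lenP A + lenP B
  | .dia A => lenP A + 2
  | .box A => lenP A + 2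

mutual
/-- The yield of a tree: the sequence of types labeling its leaves. -/
def yieldTree : PTree → List PTy
  | .leaf A => [A]
  | .node ts => yieldHedge ts
/-- The yield of a hedge. -/
def yieldHedge : List PTree → List PTy
  | [] => []
  | t :: ts => yieldTree t ++ yieldHedge ts
end
/-- L◇ : the Lambek calculus with brackets
(the antecedent must be nonempty in the right rules for the divisions). -/
inductive PProv : PHedge → PTy → Prop where
  | id (p) : PProv [.leaf (.prim p)] (.prim p)
  | ldivL (G : PHedge) (D : PCtx) (A B C) :
      PProv G A → PProv (D.plug [.leaf B]) C →
      PProv (D.plug (G ++ [.leaf (.ldiv A B)])) C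
  | ldivR (Pi : PHedge) (A B) : Pi ≠ [] →
      PProv (.leaf A :: Pi) B → PProv Pi (.ldiv A B)
  | rdivL (G : PHedge) (D : PCtx) (A B C) :
      PProv G A → PProv (D.plug [.leaf B]) C →
      PProv (D.plug (.leaf (.rdiv B A) :: G)) C
  | rdivR (Pi : PHedge) (A B) : Pi ≠ [] →
      PProv (Pi ++ [.leaf A]) B → PProv Pi (.rdiv B A)
  | mulL (G : PCtx) (A B C) :
      PProv (G.plug [.leaf A, .leaf B]) C → PProv (G.plug [.leaf (.mul A B)]) C
  | mulR (G D : PHedge) (A B) :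
      PProv G A → PProv D B → PProv (G ++ D) (.mul A B)
  | diaL (G : PCtx) (A B) :
      PProv (G.plug [.node [.leaf A]]) B → PProv (G.plug [.leaf (.dia A)]) B
  | diaR (G : PHedge) (A) :
      PProv G A → PProv [.node G] (.dia A)
  | boxL (G : PCtx) (A B) :
      PProv (G.plug [.leaf A]) B → PProv (G.plug [.node [.leaf (.box A)]]) B
  | boxR (G : PHedge) (A) :
      PProv [.node G] A → PProv G (.box A)
  | cut (G : PHedge) (D : PCtx) (A B) :
      PProv G A → PProv (D.plug [.leaf A]) B → PProv (D.plug G) B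
/-- Types of the multimodal bracketed Lambek calculus. -/
inductive ITy where
  | prim : ℕ → ITy
  | ldiv : ITy → ITy → ITy   -- ldiv A B = A \ B
  | rdiv : ITy → ITy → ITy   -- rdiv B A = B / A
  | mul  : ITy → ITy → ITy
  | dia  : ℕ → ITy → ITy
  | box  : ℕ → ITy → ITy
deriving DecidableEq

/-- Type trees: leaves labeled by types, internal nodes are indexed brackets. -/
inductive ITree where
  | leaf : ITy → ITree
  | node : ℕ → List ITree → ITree

abbrev IHedge := List ITree

/-- Contexts: a hedge with one distinguished hole. -/
inductive ICtx where
  | hole : IHedge → IHedge → ICtx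
  | brk  : ℕ → ICtx → IHedge → IHedge → ICtx

/-- Substitution of a hedge for the hole of a context. -/
def ICtx.plug : ICtx → IHedge → IHedge
  | .hole pre post, D => pre ++ D ++ post
  | .brk i c pre post, D => pre ++ (ITree.node i (c.plug D) :: post)

/-- Generators of the free group: primitive types, left brackets, right brackets. -/
abbrev Gen := ℕ ⊕ ℕ ⊕ ℕ

def lb (i : ℕ) : FreeGroup Gen := FreeGroup.of (Sum.inr (Sum.inl i))
def rb (i : ℕ) : FreeGroup Gen := FreeGroup.of (Sum.inr (Sum.inr i))

/-- Free group interpretation of types. -/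
def interpTy : ITy → FreeGroup Gen
  | .prim p => FreeGroup.of (Sum.inl p)
  | .ldiv A B => (interpTy A)⁻¹ * interpTy B
  | .rdiv B A => interpTy B * (interpTy A)⁻¹
  | .mul A B => interpTy A * interpTy B
  | .dia i A => lb i * interpTy A * rb i
  | .box i A => (lb i)⁻¹ * interpTy A * (rb i)⁻¹

mutual
/-- Free group interpretation of type trees. -/
def interpTree : ITree → FreeGroup Gen
  | .leaf A => interpTy A
  | .node i ts => lb i * interpHedge ts * rb i
/-- Free group interpretation of hedges. -/
def interpHedge : List ITree → FreeGroup Gen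
  | [] => 1
  | t :: ts => interpTree t * interpHedge ts
end

/-- Length of a type. -/
def lenTy : ITy → ℕ
  | .prim _ => 1
  | .ldiv A B => lenTy A + lenTy B
  | .rdiv B A => lenTy B + lenTy A
  | .mul A B => lenTy A + lenTy B
  | .dia _ A => lenTy A + 2
  | .box _ A => lenTy A + 2

/-- Number of occurrences of the primitive type `p_i` in a type. -/
def sigmaTy (i : ℕ) : ITy → ℕ
  | .prim p => if p = i then 1 else 0
  | .ldiv A B => sigmaTy i A + sigmaTy i B
  | .rdiv B A => sigmaTy i B + sigmaTy i A
  | .mul A B => sigmaTy i A + sigmaTy i B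
  | .dia _ A => sigmaTy i A
  | .box _ A => sigmaTy i A

/-- Total number of occurrences of `◇_i`, `□↓_i` in a type. -/
def tauTy (i : ℕ) : ITy → ℕ
  | .prim _ => 0
  | .ldiv A B => tauTy i A + tauTy i B
  | .rdiv B A => tauTy i B + tauTy i A
  | .mul A B => tauTy i A + tauTy i B
  | .dia j A => (if j = i then 1 else 0) + tauTy i A
  | .box j A => (if j = i then 1 else 0) + tauTy i A

mutual
def sigmaTree (i : ℕ) : ITree → ℕ
  | .leaf A => sigmaTy i A
  | .node _ ts => sigmaHedge i ts
def sigmaHedge (i : ℕ) : List ITree → ℕ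
  | [] => 0
  | t :: ts => sigmaTree i t + sigmaHedge i ts
end

mutual
/-- Total occurrences of `⟨_i`, `◇_i`, `□↓_i` in a tree. -/
def tauTree (i : ℕ) : ITree → ℕ
  | .leaf A => tauTy i A
  | .node j ts => (if j = i then 1 else 0) + tauHedge i ts
def tauHedge (i : ℕ) : List ITree → ℕ
  | [] => 0
  | t :: ts => tauTree i t + tauHedge i ts
end

def sigmaCtx (i : ℕ) : ICtx → ℕ
  | .hole pre post => sigmaHedge i pre + sigmaHedge i post
  | .brk _ c pre post => sigmaHedge i pre + sigmaCtx i c + sigmaHedge i post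

def tauCtx (i : ℕ) : ICtx → ℕ
  | .hole pre post => tauHedge i pre + tauHedge i post
  | .brk j c pre post => (if j = i then 1 else 0) + tauHedge i pre + tauCtx i c + tauHedge i post
/-- L◇_m : the multimodal Lambek calculus with brackets
(the antecedent must be nonempty in the right rules for the divisions). -/
inductive IProv : IHedge → ITy → Prop where
  | id (p) : IProv [.leaf (.prim p)] (.prim p)
  | ldivL (G : IHedge) (D : ICtx) (A B C) :
      IProv G A → IProv (D.plug [.leaf B]) C →
      IProv (D.plug (G ++ [.leaf (.ldiv A B)])) C
  | ldivR (Pi : IHedge) (A B) : Pi ≠ [] →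
      IProv (.leaf A :: Pi) B → IProv Pi (.ldiv A B)
  | rdivL (G : IHedge) (D : ICtx) (A B C) :
      IProv G A → IProv (D.plug [.leaf B]) C →
      IProv (D.plug (.leaf (.rdiv B A) :: G)) C
  | rdivR (Pi : IHedge) (A B) : Pi ≠ [] →
      IProv (Pi ++ [.leaf A]) B → IProv Pi (.rdiv B A)
  | mulL (G : ICtx) (A B C) :
      IProv (G.plug [.leaf A, .leaf B]) C → IProv (G.plug [.leaf (.mul A B)]) C
  | mulR (G D : IHedge) (A B) :
      IProv G A → IProv D B → IProv (G ++ D) (.mul A B)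
  | diaL (G : ICtx) (i A B) :
      IProv (G.plug [.node i [.leaf A]]) B → IProv (G.plug [.leaf (.dia i A)]) B
  | diaR (G : IHedge) (i A) :
      IProv G A → IProv [.node i G] (.dia i A)
  | boxL (G : ICtx) (i A B) :
      IProv (G.plug [.leaf A]) B → IProv (G.plug [.node i [.leaf (.box i A)]]) B
  | boxR (G : IHedge) (i A) :
      IProv [.node i G] A → IProv G (.box i A)
  | cut (G : IHedge) (D : ICtx) (A B) :
      IProv G A → IProv (D.plug [.leaf A]) B → IProv (D.plug G) B

/-- Apply a primitive type substitution and erase all indices from modalities. -/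
def eraseTy (f : ℕ → ℕ) : ITy → PTy
  | .prim p => .prim (f p)
  | .ldiv A B => .ldiv (eraseTy f A) (eraseTy f B)
  | .rdiv B A => .rdiv (eraseTy f B) (eraseTy f A)
  | .mul A B => .mul (eraseTy f A) (eraseTy f B)
  | .dia _ A => .dia (eraseTy f A)
  | .box _ A => .box (eraseTy f A)

mutual
/-- Apply a primitive type substitution and erase all indices from brackets and modalities. -/
def eraseTree (f : ℕ → ℕ) : ITree → PTree
  | .leaf A => .leaf (eraseTy f A)
  | .node _ ts => .node (eraseHedge f ts)
def eraseHedge (f : ℕ → ℕ) : List ITree → List PTree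
  | [] => []
  | t :: ts => eraseTree f t :: eraseHedge f ts
end

section ThinAux

/-! ### Renaming of primitive types and indices -/

def renTy (g h : ℕ → ℕ) : ITy → ITy
  | .prim p => .prim (g p)
  | .ldiv A B => .ldiv (renTy g h A) (renTy g h B)
  | .rdiv B A => .rdiv (renTy g h B) (renTy g h A)
  | .mul A B => .mul (renTy g h A) (renTy g h B)
  | .dia i A => .dia (h i) (renTy g h A)
  | .box i A => .box (h i) (renTy g h A)

mutual
def renTree (g h : ℕ → ℕ) : ITree → ITree
  | .leaf A => .leaf (renTy g h A)
  | .node i ts => .node (h i) (renHedge g h ts)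
def renHedge (g h : ℕ → ℕ) : List ITree → List ITree
  | [] => []
  | t :: ts => renTree g h t :: renHedge g h ts
end

def renCtx (g h : ℕ → ℕ) : ICtx → ICtx
  | .hole pre post => .hole (renHedge g h pre) (renHedge g h post)
  | .brk i c pre post => .brk (h i) (renCtx g h c) (renHedge g h pre) (renHedge g h post)

theorem renHedge_append (g h : ℕ → ℕ) (X Y : IHedge) :
    renHedge g h (X ++ Y) = renHedge g h X ++ renHedge g h Y := by
  induction X with
  | nil => simp [renHedge]
  | cons t ts ih => simp [renHedge, ih]

theorem renHedge_plug (g h : ℕ → ℕ) (D : ICtx) (X : IHedge) :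
    renHedge g h (D.plug X) = (renCtx g h D).plug (renHedge g h X) := by
  induction D generalizing X with
  | hole pre post => simp [ICtx.plug, renCtx, renHedge_append]
  | brk i c pre post ih => simp [ICtx.plug, renCtx, renHedge_append, renHedge, renTree, ih]

theorem renHedge_ne_nil (g h : ℕ → ℕ) {X : IHedge} (hx : X ≠ []) :
    renHedge g h X ≠ [] := by
  cases X with
  | nil => exact absurd rfl hx
  | cons t ts => simp [renHedge]

theorem IProv_ren (g h : ℕ → ℕ) {G : IHedge} {A : ITy} (hp : IProv G A) :
    IProv (renHedge g h G) (renTy g h A) := by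
  induction hp with
  | id p => exact IProv.id (g p)
  | ldivL G D A B C _ _ ih1 ih2 =>
      rw [renHedge_plug, renHedge_append]
      rw [renHedge_plug] at ih2
      exact IProv.ldivL _ _ _ _ _ ih1 (by simpa [renHedge, renTree, renTy] using ih2)
  | ldivR Pi A B hne _ ih =>
      exact IProv.ldivR _ _ _ (renHedge_ne_nil g h hne) (by simpa [renHedge, renTree] using ih)
  | rdivL G D A B C _ _ ih1 ih2 =>
      rw [renHedge_plug] at ih2 ⊢
      exact IProv.rdivL _ _ _ _ _ ih1 (by simpa [renHedge, renTree, renTy] using ih2)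
  | rdivR Pi A B hne _ ih =>
      exact IProv.rdivR _ _ _ (renHedge_ne_nil g h hne)
        (by simpa [renHedge_append, renHedge, renTree] using ih)
  | mulL G A B C _ ih =>
      rw [renHedge_plug] at ih ⊢
      exact IProv.mulL _ _ _ _ (by simpa [renHedge, renTree, renTy] using ih)
  | mulR G D A B _ _ ih1 ih2 =>
      rw [renHedge_append]
      exact IProv.mulR _ _ _ _ ih1 ih2
  | diaL G i A B _ ih =>
      rw [renHedge_plug] at ih ⊢
      exact IProv.diaL _ _ _ _ (by simpa [renHedge, renTree, renTy] using ih)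
  | diaR G i A _ ih =>
      exact IProv.diaR _ _ _ ih
  | boxL G i A B _ ih =>
      rw [renHedge_plug] at ih ⊢
      exact IProv.boxL _ _ _ _ (by simpa [renHedge, renTree, renTy] using ih)
  | boxR G i A _ ih =>
      exact IProv.boxR _ _ _ (by simpa [renHedge, renTree] using ih)
  | cut G D A B _ _ ih1 ih2 =>
      rw [renHedge_plug] at ih2 ⊢
      exact IProv.cut _ _ _ _ ih1 (by simpa [renHedge, renTree] using ih2)
/-! ### Counting lemmas -/

theorem sigmaHedge_append (i : ℕ) (X Y : IHedge) :
    sigmaHedge i (X ++ Y) = sigmaHedge i X + sigmaHedge i Y := by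
  induction X with
  | nil => simp [sigmaHedge]
  | cons t ts ih => simp [sigmaHedge, ih]; omega

theorem tauHedge_append (i : ℕ) (X Y : IHedge) :
    tauHedge i (X ++ Y) = tauHedge i X + tauHedge i Y := by
  induction X with
  | nil => simp [tauHedge]
  | cons t ts ih => simp [tauHedge, ih]; omega

theorem sigmaHedge_plug (i : ℕ) (D : ICtx) (X : IHedge) :
    sigmaHedge i (D.plug X) = sigmaCtx i D + sigmaHedge i X := by
  induction D generalizing X with
  | hole pre post => simp [ICtx.plug, sigmaCtx, sigmaHedge_append]; omega
  | brk j c pre post ih =>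
      simp [ICtx.plug, sigmaCtx, sigmaHedge_append, sigmaHedge, sigmaTree, ih]; omega

theorem tauHedge_plug (i : ℕ) (D : ICtx) (X : IHedge) :
    tauHedge i (D.plug X) = tauCtx i D + tauHedge i X := by
  induction D generalizing X with
  | hole pre post => simp [ICtx.plug, tauCtx, tauHedge_append]; omega
  | brk j c pre post ih =>
      simp [ICtx.plug, tauCtx, tauHedge_append, tauHedge, tauTree, ih]; omega

/-! ### Counting after renaming -/

theorem sigmaTy_ren_le (g h : ℕ → ℕ) (i j : ℕ) (hg : ∀ k, g k = i → k = j) :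
    ∀ A, sigmaTy i (renTy g h A) ≤ sigmaTy j A
  | .prim p => by
      by_cases hp : g p = i
      · obtain rfl := hg p hp; simp [renTy, sigmaTy, hp]
      · simp [renTy, sigmaTy, hp]
  | .ldiv A B => by
      have := sigmaTy_ren_le g h i j hg A; have := sigmaTy_ren_le g h i j hg B
      simp [renTy, sigmaTy]; omega
  | .rdiv B A => by
      have := sigmaTy_ren_le g h i j hg A; have := sigmaTy_ren_le g h i j hg B
      simp [renTy, sigmaTy]; omega
  | .mul A B => by
      have := sigmaTy_ren_le g h i j hg A; have := sigmaTy_ren_le g h i j hg B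
      simp [renTy, sigmaTy]; omega
  | .dia k A => by
      have := sigmaTy_ren_le g h i j hg A
      simpa [renTy, sigmaTy] using this
  | .box k A => by
      have := sigmaTy_ren_le g h i j hg A
      simpa [renTy, sigmaTy] using this

theorem sigmaTy_ren_zero (g h : ℕ → ℕ) (i : ℕ) (hg : ∀ k, g k ≠ i) :
    ∀ A, sigmaTy i (renTy g h A) = 0
  | .prim p => by simp [renTy, sigmaTy, hg p]
  | .ldiv A B => by
      simp [renTy, sigmaTy, sigmaTy_ren_zero g h i hg A, sigmaTy_ren_zero g h i hg B]
  | .rdiv B A => by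
      simp [renTy, sigmaTy, sigmaTy_ren_zero g h i hg A, sigmaTy_ren_zero g h i hg B]
  | .mul A B => by
      simp [renTy, sigmaTy, sigmaTy_ren_zero g h i hg A, sigmaTy_ren_zero g h i hg B]
  | .dia k A => by simp [renTy, sigmaTy, sigmaTy_ren_zero g h i hg A]
  | .box k A => by simp [renTy, sigmaTy, sigmaTy_ren_zero g h i hg A]

theorem tauTy_ren_le (g h : ℕ → ℕ) (i j : ℕ) (hh : ∀ k, h k = i → k = j) :
    ∀ A, tauTy i (renTy g h A) ≤ tauTy j A
  | .prim p => by simp [renTy, tauTy]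
  | .ldiv A B => by
      have := tauTy_ren_le g h i j hh A; have := tauTy_ren_le g h i j hh B
      simp [renTy, tauTy]; omega
  | .rdiv B A => by
      have := tauTy_ren_le g h i j hh A; have := tauTy_ren_le g h i j hh B
      simp [renTy, tauTy]; omega
  | .mul A B => by
      have := tauTy_ren_le g h i j hh A; have := tauTy_ren_le g h i j hh B
      simp [renTy, tauTy]; omega
  | .dia k A => by
      have := tauTy_ren_le g h i j hh A
      by_cases hk : h k = i
      · obtain rfl := hh k hk; simp [renTy, tauTy, hk]; omega
      · simp [renTy, tauTy, hk]; omega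
  | .box k A => by
      have := tauTy_ren_le g h i j hh A
      by_cases hk : h k = i
      · obtain rfl := hh k hk; simp [renTy, tauTy, hk]; omega
      · simp [renTy, tauTy, hk]; omega

theorem tauTy_ren_zero (g h : ℕ → ℕ) (i : ℕ) (hh : ∀ k, h k ≠ i) :
    ∀ A, tauTy i (renTy g h A) = 0
  | .prim p => by simp [renTy, tauTy]
  | .ldiv A B => by
      simp [renTy, tauTy, tauTy_ren_zero g h i hh A, tauTy_ren_zero g h i hh B]
  | .rdiv B A => by
      simp [renTy, tauTy, tauTy_ren_zero g h i hh A, tauTy_ren_zero g h i hh B]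
  | .mul A B => by
      simp [renTy, tauTy, tauTy_ren_zero g h i hh A, tauTy_ren_zero g h i hh B]
  | .dia k A => by simp [renTy, tauTy, tauTy_ren_zero g h i hh A, hh k]
  | .box k A => by simp [renTy, tauTy, tauTy_ren_zero g h i hh A, hh k]

mutual
theorem sigmaTree_ren_le (g h : ℕ → ℕ) (i j : ℕ) (hg : ∀ k, g k = i → k = j) :
    ∀ t, sigmaTree i (renTree g h t) ≤ sigmaTree j t
  | .leaf A => by simpa [renTree, sigmaTree] using sigmaTy_ren_le g h i j hg A
  | .node k ts => by simpa [renTree, sigmaTree] using sigmaHedge_ren_le g h i j hg ts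
theorem sigmaHedge_ren_le (g h : ℕ → ℕ) (i j : ℕ) (hg : ∀ k, g k = i → k = j) :
    ∀ ts, sigmaHedge i (renHedge g h ts) ≤ sigmaHedge j ts
  | [] => by simp [renHedge, sigmaHedge]
  | t :: ts => by
      have := sigmaTree_ren_le g h i j hg t; have := sigmaHedge_ren_le g h i j hg ts
      simp [renHedge, sigmaHedge]; omega
end

mutual
theorem sigmaTree_ren_zero (g h : ℕ → ℕ) (i : ℕ) (hg : ∀ k, g k ≠ i) :
    ∀ t, sigmaTree i (renTree g h t) = 0
  | .leaf A => by simpa [renTree, sigmaTree] using sigmaTy_ren_zero g h i hg A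
  | .node k ts => by simpa [renTree, sigmaTree] using sigmaHedge_ren_zero g h i hg ts
theorem sigmaHedge_ren_zero (g h : ℕ → ℕ) (i : ℕ) (hg : ∀ k, g k ≠ i) :
    ∀ ts, sigmaHedge i (renHedge g h ts) = 0
  | [] => by simp [renHedge, sigmaHedge]
  | t :: ts => by
      simp [renHedge, sigmaHedge, sigmaTree_ren_zero g h i hg t,
        sigmaHedge_ren_zero g h i hg ts]
end

mutual
theorem tauTree_ren_le (g h : ℕ → ℕ) (i j : ℕ) (hh : ∀ k, h k = i → k = j) :
    ∀ t, tauTree i (renTree g h t) ≤ tauTree j t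
  | .leaf A => by simpa [renTree, tauTree] using tauTy_ren_le g h i j hh A
  | .node k ts => by
      have := tauHedge_ren_le g h i j hh ts
      by_cases hk : h k = i
      · obtain rfl := hh k hk; simp [renTree, tauTree, hk]; omega
      · simp [renTree, tauTree, hk]; omega
theorem tauHedge_ren_le (g h : ℕ → ℕ) (i j : ℕ) (hh : ∀ k, h k = i → k = j) :
    ∀ ts, tauHedge i (renHedge g h ts) ≤ tauHedge j ts
  | [] => by simp [renHedge, tauHedge]
  | t :: ts => by
      have := tauTree_ren_le g h i j hh t; have := tauHedge_ren_le g h i j hh ts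
      simp [renHedge, tauHedge]; omega
end

mutual
theorem tauTree_ren_zero (g h : ℕ → ℕ) (i : ℕ) (hh : ∀ k, h k ≠ i) :
    ∀ t, tauTree i (renTree g h t) = 0
  | .leaf A => by simpa [renTree, tauTree] using tauTy_ren_zero g h i hh A
  | .node k ts => by simp [renTree, tauTree, hh k, tauHedge_ren_zero g h i hh ts]
theorem tauHedge_ren_zero (g h : ℕ → ℕ) (i : ℕ) (hh : ∀ k, h k ≠ i) :
    ∀ ts, tauHedge i (renHedge g h ts) = 0
  | [] => by simp [renHedge, tauHedge]
  | t :: ts => by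
      simp [renHedge, tauHedge, tauTree_ren_zero g h i hh t, tauHedge_ren_zero g h i hh ts]
end

theorem sigmaCtx_ren_le (g h : ℕ → ℕ) (i j : ℕ) (hg : ∀ k, g k = i → k = j) :
    ∀ D, sigmaCtx i (renCtx g h D) ≤ sigmaCtx j D
  | .hole pre post => by
      have := sigmaHedge_ren_le g h i j hg pre; have := sigmaHedge_ren_le g h i j hg post
      simp [renCtx, sigmaCtx]; omega
  | .brk k c pre post => by
      have := sigmaHedge_ren_le g h i j hg pre; have := sigmaHedge_ren_le g h i j hg post
      have := sigmaCtx_ren_le g h i j hg c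
      simp [renCtx, sigmaCtx]; omega

theorem sigmaCtx_ren_zero (g h : ℕ → ℕ) (i : ℕ) (hg : ∀ k, g k ≠ i) :
    ∀ D, sigmaCtx i (renCtx g h D) = 0
  | .hole pre post => by
      simp [renCtx, sigmaCtx, sigmaHedge_ren_zero g h i hg pre,
        sigmaHedge_ren_zero g h i hg post]
  | .brk k c pre post => by
      simp [renCtx, sigmaCtx, sigmaHedge_ren_zero g h i hg pre,
        sigmaHedge_ren_zero g h i hg post, sigmaCtx_ren_zero g h i hg c]

theorem tauCtx_ren_le (g h : ℕ → ℕ) (i j : ℕ) (hh : ∀ k, h k = i → k = j) :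
    ∀ D, tauCtx i (renCtx g h D) ≤ tauCtx j D
  | .hole pre post => by
      have := tauHedge_ren_le g h i j hh pre; have := tauHedge_ren_le g h i j hh post
      simp [renCtx, tauCtx]; omega
  | .brk k c pre post => by
      have := tauHedge_ren_le g h i j hh pre; have := tauHedge_ren_le g h i j hh post
      have := tauCtx_ren_le g h i j hh c
      by_cases hk : h k = i
      · obtain rfl := hh k hk; simp [renCtx, tauCtx, hk]; omega
      · simp [renCtx, tauCtx, hk]; omega

theorem tauCtx_ren_zero (g h : ℕ → ℕ) (i : ℕ) (hh : ∀ k, h k ≠ i) :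
    ∀ D, tauCtx i (renCtx g h D) = 0
  | .hole pre post => by
      simp [renCtx, tauCtx, tauHedge_ren_zero g h i hh pre, tauHedge_ren_zero g h i hh post]
  | .brk k c pre post => by
      simp [renCtx, tauCtx, hh k, tauHedge_ren_zero g h i hh pre,
        tauHedge_ren_zero g h i hh post, tauCtx_ren_zero g h i hh c]
/-! ### Erasure lemmas -/

def eraseCtx (f : ℕ → ℕ) : ICtx → PCtx
  | .hole pre post => .hole (eraseHedge f pre) (eraseHedge f post)
  | .brk _ c pre post => .brk (eraseCtx f c) (eraseHedge f pre) (eraseHedge f post)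

theorem eraseHedge_append (f : ℕ → ℕ) (X Y : IHedge) :
    eraseHedge f (X ++ Y) = eraseHedge f X ++ eraseHedge f Y := by
  induction X with
  | nil => simp [eraseHedge]
  | cons t ts ih => simp [eraseHedge, ih]

theorem eraseHedge_plug (f : ℕ → ℕ) (D : ICtx) (X : IHedge) :
    eraseHedge f (D.plug X) = (eraseCtx f D).plug (eraseHedge f X) := by
  induction D generalizing X with
  | hole pre post => simp [ICtx.plug, PCtx.plug, eraseCtx, eraseHedge_append]
  | brk i c pre post ih =>
      simp [ICtx.plug, PCtx.plug, eraseCtx, eraseHedge_append, eraseHedge, eraseTree, ih]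

theorem eraseTy_ren (f g h : ℕ → ℕ) :
    ∀ A, eraseTy f (renTy g h A) = eraseTy (fun p => f (g p)) A
  | .prim p => rfl
  | .ldiv A B => by simp [renTy, eraseTy, eraseTy_ren f g h A, eraseTy_ren f g h B]
  | .rdiv B A => by simp [renTy, eraseTy, eraseTy_ren f g h A, eraseTy_ren f g h B]
  | .mul A B => by simp [renTy, eraseTy, eraseTy_ren f g h A, eraseTy_ren f g h B]
  | .dia i A => by simp [renTy, eraseTy, eraseTy_ren f g h A]
  | .box i A => by simp [renTy, eraseTy, eraseTy_ren f g h A]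

mutual
theorem eraseTree_ren (f g h : ℕ → ℕ) :
    ∀ t, eraseTree f (renTree g h t) = eraseTree (fun p => f (g p)) t
  | .leaf A => by simp [renTree, eraseTree, eraseTy_ren]
  | .node i ts => by simp [renTree, eraseTree, eraseHedge_ren f g h ts]
theorem eraseHedge_ren (f g h : ℕ → ℕ) :
    ∀ ts, eraseHedge f (renHedge g h ts) = eraseHedge (fun p => f (g p)) ts
  | [] => rfl
  | t :: ts => by simp [renHedge, eraseHedge, eraseTree_ren, eraseHedge_ren f g h ts]
end

theorem eraseCtx_ren (f g h : ℕ → ℕ) :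
    ∀ D, eraseCtx f (renCtx g h D) = eraseCtx (fun p => f (g p)) D
  | .hole pre post => by simp [renCtx, eraseCtx, eraseHedge_ren]
  | .brk i c pre post => by simp [renCtx, eraseCtx, eraseHedge_ren, eraseCtx_ren f g h c]

theorem eraseHedge_eq_nil {f : ℕ → ℕ} {H : IHedge} (h : eraseHedge f H = []) : H = [] := by
  cases H with
  | nil => rfl
  | cons t ts => simp [eraseHedge] at h

theorem eraseHedge_eq_cons {f : ℕ → ℕ} {H : IHedge} {t : PTree} {X : PHedge}
    (h : eraseHedge f H = t :: X) :
    ∃ t' H', H = t' :: H' ∧ eraseTree f t' = t ∧ eraseHedge f H' = X := by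
  cases H with
  | nil => simp [eraseHedge] at h
  | cons t' H' =>
      simp only [eraseHedge, List.cons.injEq] at h
      exact ⟨t', H', rfl, h.1, h.2⟩

theorem eraseHedge_eq_append {f : ℕ → ℕ} {H : IHedge} {X Y : PHedge}
    (h : eraseHedge f H = X ++ Y) :
    ∃ H1 H2, H = H1 ++ H2 ∧ eraseHedge f H1 = X ∧ eraseHedge f H2 = Y := by
  induction X generalizing H with
  | nil => exact ⟨[], H, rfl, rfl, by simpa using h⟩
  | cons t X ih =>
      rw [List.cons_append] at h
      obtain ⟨t', H', rfl, ht, hH⟩ := eraseHedge_eq_cons h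
      obtain ⟨H1, H2, rfl, h1, h2⟩ := ih hH
      exact ⟨t' :: H1, H2, rfl, by simp [eraseHedge, ht, h1], h2⟩

theorem eraseTree_eq_leaf {f : ℕ → ℕ} {t : ITree} {A : PTy}
    (h : eraseTree f t = .leaf A) : ∃ A', t = .leaf A' ∧ eraseTy f A' = A := by
  cases t with
  | leaf A' => exact ⟨A', rfl, by simpa [eraseTree] using h⟩
  | node i ts => simp [eraseTree] at h

theorem eraseTree_eq_node {f : ℕ → ℕ} {t : ITree} {ts : PHedge}
    (h : eraseTree f t = .node ts) : ∃ i ts', t = .node i ts' ∧ eraseHedge f ts' = ts := by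
  cases t with
  | leaf A' => simp [eraseTree] at h
  | node i ts' => exact ⟨i, ts', rfl, by simpa [eraseTree] using h⟩

theorem eraseHedge_eq_plug {f : ℕ → ℕ} {H : IHedge} {D : PCtx} {X : PHedge}
    (h : eraseHedge f H = D.plug X) :
    ∃ D' X', H = D'.plug X' ∧ eraseCtx f D' = D ∧ eraseHedge f X' = X := by
  induction D generalizing H with
  | hole pre post =>
      simp only [PCtx.plug] at h
      obtain ⟨H1, H23, rfl, h1, h23⟩ := eraseHedge_eq_append (by simpa using h)
      obtain ⟨H2, H3, rfl, h2, h3⟩ := eraseHedge_eq_append h23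
      exact ⟨.hole H1 H3, H2, by simp [ICtx.plug], by simp [eraseCtx, h1, h3], h2⟩
  | brk c pre post ih =>
      simp only [PCtx.plug] at h
      obtain ⟨H1, H2, rfl, h1, h2⟩ := eraseHedge_eq_append h
      obtain ⟨t', H3, rfl, ht, h3⟩ := eraseHedge_eq_cons h2
      obtain ⟨i, ts', rfl, hts⟩ := eraseTree_eq_node ht
      obtain ⟨D', X', rfl, hD, hX⟩ := ih hts
      exact ⟨.brk i D' H1 H3, X', by simp [ICtx.plug], by simp [eraseCtx, h1, h3, hD], hX⟩

theorem eraseTy_eq_ldiv {f : ℕ → ℕ} {A' : ITy} {A B : PTy} (h : eraseTy f A' = .ldiv A B) :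
    ∃ A1 B1, A' = .ldiv A1 B1 ∧ eraseTy f A1 = A ∧ eraseTy f B1 = B := by
  cases A' <;> simp [eraseTy] at h
  exact ⟨_, _, rfl, h.1, h.2⟩

theorem eraseTy_eq_rdiv {f : ℕ → ℕ} {A' : ITy} {B A : PTy} (h : eraseTy f A' = .rdiv B A) :
    ∃ B1 A1, A' = .rdiv B1 A1 ∧ eraseTy f B1 = B ∧ eraseTy f A1 = A := by
  cases A' <;> simp [eraseTy] at h
  exact ⟨_, _, rfl, h.1, h.2⟩

theorem eraseTy_eq_mul {f : ℕ → ℕ} {A' : ITy} {A B : PTy} (h : eraseTy f A' = .mul A B) :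
    ∃ A1 B1, A' = .mul A1 B1 ∧ eraseTy f A1 = A ∧ eraseTy f B1 = B := by
  cases A' <;> simp [eraseTy] at h
  exact ⟨_, _, rfl, h.1, h.2⟩

theorem eraseTy_eq_dia {f : ℕ → ℕ} {A' : ITy} {A : PTy} (h : eraseTy f A' = .dia A) :
    ∃ i A1, A' = .dia i A1 ∧ eraseTy f A1 = A := by
  cases A' <;> simp [eraseTy] at h
  exact ⟨_, _, rfl, h⟩

theorem eraseTy_eq_box {f : ℕ → ℕ} {A' : ITy} {A : PTy} (h : eraseTy f A' = .box A) :
    ∃ i A1, A' = .box i A1 ∧ eraseTy f A1 = A := by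
  cases A' <;> simp [eraseTy] at h
  exact ⟨_, _, rfl, h⟩
/-! ### Specific renaming functions -/

def gE (j : ℕ) : ℕ := 2 * j
def gO (j : ℕ) : ℕ := 2 * j + 1
def gS (j : ℕ) : ℕ := j + 1

theorem gE_le (i : ℕ) : ∀ k, gE k = i → k = i / 2 := fun k hk => by
  simp only [gE] at hk; omega
theorem gE_zero {i : ℕ} (hi : i % 2 = 1) : ∀ k, gE k ≠ i := fun k hk => by
  simp only [gE] at hk; omega
theorem gO_le (i : ℕ) : ∀ k, gO k = i → k = i / 2 := fun k hk => by
  simp only [gO] at hk; omega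
theorem gO_zero {i : ℕ} (hi : i % 2 = 0) : ∀ k, gO k ≠ i := fun k hk => by
  simp only [gO] at hk; omega
theorem gS_le (i : ℕ) : ∀ k, gS k = i → k = i - 1 := fun k hk => by
  simp only [gS] at hk; omega
theorem gS_zero : ∀ k, gS k ≠ 0 := fun k hk => by simp [gS] at hk

def comb (f1 f2 : ℕ → ℕ) (i : ℕ) : ℕ := if i % 2 = 0 then f1 (i / 2) else f2 (i / 2)

theorem comb_gE (f1 f2 : ℕ → ℕ) : (fun p => comb f1 f2 (gE p)) = f1 := by
  funext p
  have h1 : (2 * p) % 2 = 0 := by omega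
  have h2 : (2 * p) / 2 = p := by omega
  simp [comb, gE, h1, h2]

theorem comb_gO (f1 f2 : ℕ → ℕ) : (fun p => comb f1 f2 (gO p)) = f2 := by
  funext p
  have h1 : (2 * p + 1) % 2 = 1 := by omega
  have h2 : (2 * p + 1) / 2 = p := by omega
  simp [comb, gO, h1, h2]

theorem gS_le' (j : ℕ) : ∀ k, gS k = j + 1 → k = j := fun k hk => by
  simp only [gS] at hk; omega
/-! ### Yield lists of primitives and indices -/

def primList : ITy → List ℕ
  | .prim p => [p]
  | .ldiv A B => primList A ++ primList B
  | .rdiv B A => primList B ++ primList A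
  | .mul A B => primList A ++ primList B
  | .dia _ A => primList A
  | .box _ A => primList A

def idxList : ITy → List ℕ
  | .prim _ => []
  | .ldiv A B => idxList A ++ idxList B
  | .rdiv B A => idxList B ++ idxList A
  | .mul A B => idxList A ++ idxList B
  | .dia i A => i :: idxList A
  | .box i A => i :: idxList A

def primListP : PTy → List ℕ
  | .prim p => [p]
  | .ldiv A B => primListP A ++ primListP B
  | .rdiv B A => primListP B ++ primListP A
  | .mul A B => primListP A ++ primListP B
  | .dia A => primListP A
  | .box A => primListP A

def idxLenP : PTy → ℕ
  | .prim _ => 0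
  | .ldiv A B => idxLenP A + idxLenP B
  | .rdiv B A => idxLenP B + idxLenP A
  | .mul A B => idxLenP A + idxLenP B
  | .dia A => idxLenP A + 1
  | .box A => idxLenP A + 1

theorem primList_erase (f : ℕ → ℕ) :
    ∀ A, primListP (eraseTy f A) = (primList A).map f
  | .prim p => rfl
  | .ldiv A B => by
      simp [eraseTy, primListP, primList, primList_erase f A, primList_erase f B]
  | .rdiv B A => by
      simp [eraseTy, primListP, primList, primList_erase f A, primList_erase f B]
  | .mul A B => by
      simp [eraseTy, primListP, primList, primList_erase f A, primList_erase f B]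
  | .dia i A => by simp [eraseTy, primListP, primList, primList_erase f A]
  | .box i A => by simp [eraseTy, primListP, primList, primList_erase f A]

theorem idxLen_erase (f : ℕ → ℕ) :
    ∀ A, idxLenP (eraseTy f A) = (idxList A).length
  | .prim p => rfl
  | .ldiv A B => by
      simp [eraseTy, idxLenP, idxList, idxLen_erase f A, idxLen_erase f B]
  | .rdiv B A => by
      simp [eraseTy, idxLenP, idxList, idxLen_erase f A, idxLen_erase f B]
  | .mul A B => by
      simp [eraseTy, idxLenP, idxList, idxLen_erase f A, idxLen_erase f B]
  | .dia i A => by simp [eraseTy, idxLenP, idxList, idxLen_erase f A]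
  | .box i A => by simp [eraseTy, idxLenP, idxList, idxLen_erase f A]

theorem sigmaTy_eq_count (i : ℕ) : ∀ A, sigmaTy i A = (primList A).count i
  | .prim p => by
      simp only [sigmaTy, primList, List.count_cons, List.count_nil]
      by_cases h : p = i <;> simp [h]
  | .ldiv A B => by
      simp [sigmaTy, primList, List.count_append, sigmaTy_eq_count i A, sigmaTy_eq_count i B]
  | .rdiv B A => by
      simp [sigmaTy, primList, List.count_append, sigmaTy_eq_count i A, sigmaTy_eq_count i B]
  | .mul A B => by
      simp [sigmaTy, primList, List.count_append, sigmaTy_eq_count i A, sigmaTy_eq_count i B]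
  | .dia j A => by simp [sigmaTy, primList, sigmaTy_eq_count i A]
  | .box j A => by simp [sigmaTy, primList, sigmaTy_eq_count i A]

theorem tauTy_eq_count (i : ℕ) : ∀ A, tauTy i A = (idxList A).count i
  | .prim p => by simp [tauTy, idxList]
  | .ldiv A B => by
      simp [tauTy, idxList, List.count_append, tauTy_eq_count i A, tauTy_eq_count i B]
  | .rdiv B A => by
      simp [tauTy, idxList, List.count_append, tauTy_eq_count i A, tauTy_eq_count i B]
  | .mul A B => by
      simp [tauTy, idxList, List.count_append, tauTy_eq_count i A, tauTy_eq_count i B]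
  | .dia j A => by
      simp only [tauTy, idxList, List.count_cons, tauTy_eq_count i A]
      by_cases h : j = i <;> simp [h] <;> omega
  | .box j A => by
      simp only [tauTy, idxList, List.count_cons, tauTy_eq_count i A]
      by_cases h : j = i <;> simp [h] <;> omega

theorem zip_of_map_eq {f1 f2 : ℕ → ℕ} :
    ∀ {xs ys : List ℕ}, xs.map f1 = ys.map f2 →
      ∀ pr ∈ xs.zip ys, f1 pr.1 = f2 pr.2 := by
  intro xs
  induction xs with
  | nil => intro ys h pr hpr; simp at hpr
  | cons x xs ih =>
      intro ys h pr hpr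
      cases ys with
      | nil => simp at hpr
      | cons y ys =>
          simp only [List.map_cons, List.cons.injEq] at h
          simp only [List.zip_cons_cons, List.mem_cons] at hpr
          rcases hpr with rfl | hpr
          · exact h.1
          · exact ih h.2 pr hpr
/-! ### Unification of two decorations of the same bare type -/

theorem ren_unify (u v : ℕ → ℕ) {f1 f2 : ℕ → ℕ} :
    ∀ (A1 A2 : ITy), eraseTy f1 A1 = eraseTy f2 A2 →
      (∀ pr ∈ (primList A1).zip (primList A2), u pr.1 = u pr.2) →
      (∀ pr ∈ (idxList A1).zip (idxList A2), v pr.1 = v pr.2) →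
      renTy u v A1 = renTy u v A2 := by
  intro A1
  induction A1 with
  | prim p =>
      intro A2 he hu hv
      cases A2 <;> simp [eraseTy] at he
      case prim q =>
      simp only [renTy, ITy.prim.injEq]
      exact hu (p, q) (by simp [primList])
  | ldiv A B ihA ihB =>
      intro A2 he hu hv
      cases A2 <;> simp [eraseTy] at he
      case ldiv A' B' =>
      have hlp : (primList A).length = (primList A').length := by
        have hmap : List.map f1 (primList A) = List.map f2 (primList A') := by
          rw [← primList_erase, ← primList_erase, he.1]
        have := congrArg List.length hmap
        simpa using this
      have hli : (idxList A).length = (idxList A').length := by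
        have h1 := idxLen_erase f1 A
        have h2 := idxLen_erase f2 A'
        rw [he.1] at h1; rw [h2] at h1; omega
      simp only [primList, idxList] at hu hv
      rw [List.zip_append hlp] at hu
      rw [List.zip_append hli] at hv
      simp only [renTy]
      rw [ihA A' he.1 (fun pr h => hu pr (List.mem_append_left _ h))
            (fun pr h => hv pr (List.mem_append_left _ h)),
          ihB B' he.2 (fun pr h => hu pr (List.mem_append_right _ h))
            (fun pr h => hv pr (List.mem_append_right _ h))]
  | rdiv B A ihB ihA =>
      intro A2 he hu hv
      cases A2 <;> simp [eraseTy] at he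
      case rdiv B' A' =>
      have hlp : (primList B).length = (primList B').length := by
        have hmap : List.map f1 (primList B) = List.map f2 (primList B') := by
          rw [← primList_erase, ← primList_erase, he.1]
        have := congrArg List.length hmap
        simpa using this
      have hli : (idxList B).length = (idxList B').length := by
        have h1 := idxLen_erase f1 B
        have h2 := idxLen_erase f2 B'
        rw [he.1] at h1; rw [h2] at h1; omega
      simp only [primList, idxList] at hu hv
      rw [List.zip_append hlp] at hu
      rw [List.zip_append hli] at hv
      simp only [renTy]
      rw [ihB B' he.1 (fun pr h => hu pr (List.mem_append_left _ h))
            (fun pr h => hv pr (List.mem_append_left _ h)),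
          ihA A' he.2 (fun pr h => hu pr (List.mem_append_right _ h))
            (fun pr h => hv pr (List.mem_append_right _ h))]
  | mul A B ihA ihB =>
      intro A2 he hu hv
      cases A2 <;> simp [eraseTy] at he
      case mul A' B' =>
      have hlp : (primList A).length = (primList A').length := by
        have hmap : List.map f1 (primList A) = List.map f2 (primList A') := by
          rw [← primList_erase, ← primList_erase, he.1]
        have := congrArg List.length hmap
        simpa using this
      have hli : (idxList A).length = (idxList A').length := by
        have h1 := idxLen_erase f1 A
        have h2 := idxLen_erase f2 A'
        rw [he.1] at h1; rw [h2] at h1; omega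
      simp only [primList, idxList] at hu hv
      rw [List.zip_append hlp] at hu
      rw [List.zip_append hli] at hv
      simp only [renTy]
      rw [ihA A' he.1 (fun pr h => hu pr (List.mem_append_left _ h))
            (fun pr h => hv pr (List.mem_append_left _ h)),
          ihB B' he.2 (fun pr h => hu pr (List.mem_append_right _ h))
            (fun pr h => hv pr (List.mem_append_right _ h))]
  | dia i A ihA =>
      intro A2 he hu hv
      cases A2 <;> simp [eraseTy] at he
      case dia j A' =>
      simp only [primList, idxList, List.zip_cons_cons] at hu hv
      simp only [renTy]
      rw [ihA A' he (fun pr h => hu pr h) (fun pr h => hv pr (List.mem_cons_of_mem _ h)),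
        hv (i, j) List.mem_cons_self]
  | box i A ihA =>
      intro A2 he hu hv
      cases A2 <;> simp [eraseTy] at he
      case box j A' =>
      simp only [primList, idxList, List.zip_cons_cons] at hu hv
      simp only [renTy]
      rw [ihA A' he (fun pr h => hu pr h) (fun pr h => hv pr (List.mem_cons_of_mem _ h)),
        hv (i, j) List.mem_cons_self]
/-! ### Fiber-sum bounds for counting after an arbitrary renaming -/

theorem sigmaTy_ren_sum (u v : ℕ → ℕ) (i : ℕ) (P : Finset ℕ) (hP : ∀ p, u p = i → p ∈ P) :
    ∀ A, sigmaTy i (renTy u v A) ≤ ∑ p ∈ P.filter (fun p => u p = i), sigmaTy p A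
  | .prim q => by
      by_cases hq : u q = i
      · have hmem : q ∈ P.filter (fun p => u p = i) := by
          simp [Finset.mem_filter, hP q hq, hq]
        have := Finset.single_le_sum (f := fun p => sigmaTy p (ITy.prim q))
          (fun _ _ => Nat.zero_le _) hmem
        simpa [renTy, sigmaTy, hq] using this
      · simp [renTy, sigmaTy, hq]
  | .ldiv A B => by
      have hA := sigmaTy_ren_sum u v i P hP A
      have hB := sigmaTy_ren_sum u v i P hP B
      simp only [renTy, sigmaTy, Finset.sum_add_distrib]
      omega
  | .rdiv B A => by
      have hA := sigmaTy_ren_sum u v i P hP A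
      have hB := sigmaTy_ren_sum u v i P hP B
      simp only [renTy, sigmaTy, Finset.sum_add_distrib]
      omega
  | .mul A B => by
      have hA := sigmaTy_ren_sum u v i P hP A
      have hB := sigmaTy_ren_sum u v i P hP B
      simp only [renTy, sigmaTy, Finset.sum_add_distrib]
      omega
  | .dia j A => by
      have hA := sigmaTy_ren_sum u v i P hP A
      simpa [renTy, sigmaTy] using hA
  | .box j A => by
      have hA := sigmaTy_ren_sum u v i P hP A
      simpa [renTy, sigmaTy] using hA

theorem tauTy_ren_sum (u v : ℕ → ℕ) (i : ℕ) (P : Finset ℕ) (hP : ∀ p, v p = i → p ∈ P) :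
    ∀ A, tauTy i (renTy u v A) ≤ ∑ p ∈ P.filter (fun p => v p = i), tauTy p A
  | .prim q => by simp [renTy, tauTy]
  | .ldiv A B => by
      have hA := tauTy_ren_sum u v i P hP A
      have hB := tauTy_ren_sum u v i P hP B
      simp only [renTy, tauTy, Finset.sum_add_distrib]
      omega
  | .rdiv B A => by
      have hA := tauTy_ren_sum u v i P hP A
      have hB := tauTy_ren_sum u v i P hP B
      simp only [renTy, tauTy, Finset.sum_add_distrib]
      omega
  | .mul A B => by
      have hA := tauTy_ren_sum u v i P hP A
      have hB := tauTy_ren_sum u v i P hP B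
      simp only [renTy, tauTy, Finset.sum_add_distrib]
      omega
  | .dia j A => by
      have hA := tauTy_ren_sum u v i P hP A
      simp only [renTy, tauTy, Finset.sum_add_distrib]
      by_cases hj : v j = i
      · have hmem : j ∈ P.filter (fun p => v p = i) := by
          simp [Finset.mem_filter, hP j hj, hj]
        have h1 : (1:ℕ) ≤ ∑ p ∈ P.filter (fun p => v p = i), (if j = p then 1 else 0) := by
          have := Finset.single_le_sum (f := fun p => if j = p then (1:ℕ) else 0)
            (fun _ _ => by positivity) hmem
          simpa using this
        rw [if_pos hj]
        omega
      · rw [if_neg hj]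
        omega
  | .box j A => by
      have hA := tauTy_ren_sum u v i P hP A
      simp only [renTy, tauTy, Finset.sum_add_distrib]
      by_cases hj : v j = i
      · have hmem : j ∈ P.filter (fun p => v p = i) := by
          simp [Finset.mem_filter, hP j hj, hj]
        have h1 : (1:ℕ) ≤ ∑ p ∈ P.filter (fun p => v p = i), (if j = p then 1 else 0) := by
          have := Finset.single_le_sum (f := fun p => if j = p then (1:ℕ) else 0)
            (fun _ _ => by positivity) hmem
          simpa using this
        rw [if_pos hj]
        omega
      · rw [if_neg hj]
        omega

mutual
theorem sigmaTree_ren_sum (u v : ℕ → ℕ) (i : ℕ) (P : Finset ℕ) (hP : ∀ p, u p = i → p ∈ P) :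
    ∀ t, sigmaTree i (renTree u v t) ≤ ∑ p ∈ P.filter (fun p => u p = i), sigmaTree p t
  | .leaf A => by simpa [renTree, sigmaTree] using sigmaTy_ren_sum u v i P hP A
  | .node j ts => by simpa [renTree, sigmaTree] using sigmaHedge_ren_sum u v i P hP ts
theorem sigmaHedge_ren_sum (u v : ℕ → ℕ) (i : ℕ) (P : Finset ℕ) (hP : ∀ p, u p = i → p ∈ P) :
    ∀ ts, sigmaHedge i (renHedge u v ts) ≤ ∑ p ∈ P.filter (fun p => u p = i), sigmaHedge p ts
  | [] => by simp [renHedge, sigmaHedge]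
  | t :: ts => by
      have h1 := sigmaTree_ren_sum u v i P hP t
      have h2 := sigmaHedge_ren_sum u v i P hP ts
      simp only [renHedge, sigmaHedge, Finset.sum_add_distrib]
      omega
end

mutual
theorem tauTree_ren_sum (u v : ℕ → ℕ) (i : ℕ) (P : Finset ℕ) (hP : ∀ p, v p = i → p ∈ P) :
    ∀ t, tauTree i (renTree u v t) ≤ ∑ p ∈ P.filter (fun p => v p = i), tauTree p t
  | .leaf A => by simpa [renTree, tauTree] using tauTy_ren_sum u v i P hP A
  | .node j ts => by
      have hA := tauHedge_ren_sum u v i P hP ts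
      simp only [renTree, tauTree, Finset.sum_add_distrib]
      by_cases hj : v j = i
      · have hmem : j ∈ P.filter (fun p => v p = i) := by
          simp [Finset.mem_filter, hP j hj, hj]
        have h1 : (1:ℕ) ≤ ∑ p ∈ P.filter (fun p => v p = i), (if j = p then 1 else 0) := by
          have := Finset.single_le_sum (f := fun p => if j = p then (1:ℕ) else 0)
            (fun _ _ => by positivity) hmem
          simpa using this
        rw [if_pos hj]
        omega
      · rw [if_neg hj]
        omega
theorem tauHedge_ren_sum (u v : ℕ → ℕ) (i : ℕ) (P : Finset ℕ) (hP : ∀ p, v p = i → p ∈ P) :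
    ∀ ts, tauHedge i (renHedge u v ts) ≤ ∑ p ∈ P.filter (fun p => v p = i), tauHedge p ts
  | [] => by simp [renHedge, tauHedge]
  | t :: ts => by
      have h1 := tauTree_ren_sum u v i P hP t
      have h2 := tauHedge_ren_sum u v i P hP ts
      simp only [renHedge, tauHedge, Finset.sum_add_distrib]
      omega
end

theorem sigmaCtx_ren_sum (u v : ℕ → ℕ) (i : ℕ) (P : Finset ℕ) (hP : ∀ p, u p = i → p ∈ P) :
    ∀ D, sigmaCtx i (renCtx u v D) ≤ ∑ p ∈ P.filter (fun p => u p = i), sigmaCtx p D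
  | .hole pre post => by
      have h1 := sigmaHedge_ren_sum u v i P hP pre
      have h2 := sigmaHedge_ren_sum u v i P hP post
      simp only [renCtx, sigmaCtx, Finset.sum_add_distrib]
      omega
  | .brk j c pre post => by
      have h1 := sigmaHedge_ren_sum u v i P hP pre
      have h2 := sigmaHedge_ren_sum u v i P hP post
      have h3 := sigmaCtx_ren_sum u v i P hP c
      simp only [renCtx, sigmaCtx, Finset.sum_add_distrib]
      omega

theorem tauCtx_ren_sum (u v : ℕ → ℕ) (i : ℕ) (P : Finset ℕ) (hP : ∀ p, v p = i → p ∈ P) :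
    ∀ D, tauCtx i (renCtx u v D) ≤ ∑ p ∈ P.filter (fun p => v p = i), tauCtx p D
  | .hole pre post => by
      have h1 := tauHedge_ren_sum u v i P hP pre
      have h2 := tauHedge_ren_sum u v i P hP post
      simp only [renCtx, tauCtx, Finset.sum_add_distrib]
      omega
  | .brk j c pre post => by
      have h1 := tauHedge_ren_sum u v i P hP pre
      have h2 := tauHedge_ren_sum u v i P hP post
      have h3 := tauCtx_ren_sum u v i P hP c
      simp only [renCtx, tauCtx, Finset.sum_add_distrib]
      by_cases hj : v j = i
      · have hmem : j ∈ P.filter (fun p => v p = i) := by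
          simp [Finset.mem_filter, hP j hj, hj]
        have h4 : (1:ℕ) ≤ ∑ p ∈ P.filter (fun p => v p = i), (if j = p then 1 else 0) := by
          have := Finset.single_le_sum (f := fun p => if j = p then (1:ℕ) else 0)
            (fun _ _ => by positivity) hmem
          simpa using this
        rw [if_pos hj]
        omega
      · rw [if_neg hj]
        omega
/-! ### Construction of a unifier with the thinness potential bound -/

theorem mgu : ∀ (L : List (ℕ × ℕ)),
    ∃ u : ℕ → ℕ,
      (∀ p, p ∉ L.map Prod.fst ++ L.map Prod.snd → u p = p) ∧
      (∀ p, p ∈ L.map Prod.fst ++ L.map Prod.snd → u p ∈ L.map Prod.fst ++ L.map Prod.snd) ∧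
      (∀ pr ∈ L, u pr.1 = u pr.2) ∧
      (∀ F : ℕ → ℕ, (∀ pr ∈ L, F pr.1 = F pr.2) → ∀ p, F (u p) = F p) ∧
      (∀ i, (∑ p ∈ (L.map Prod.fst ++ L.map Prod.snd).toFinset.filter (fun p => u p = i),
          ((2 : ℤ) - ((L.map Prod.fst ++ L.map Prod.snd).count p : ℤ))) ≤ 2) := by
  intro L
  induction L with
  | nil =>
      refine ⟨id, fun p _ => rfl, fun p hp => by simp at hp, fun pr hpr => by simp at hpr,
        fun F _ p => rfl, fun i => by simp⟩
  | cons pr L ih =>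
      obtain ⟨a, b⟩ := pr
      obtain ⟨u', hout, hin, hunif, hF, hpot⟩ := ih
      -- notation
      set nms := L.map Prod.fst ++ L.map Prod.snd with hnms
      set N' : Finset ℕ := nms.toFinset with hN'
      have hinN' : ∀ p ∈ N', u' p ∈ N' := by
        intro p hp
        rw [hN', List.mem_toFinset] at hp ⊢
        exact hin p hp
      have houtN' : ∀ p, p ∉ N' → u' p = p := by
        intro p hp
        rw [hN', List.mem_toFinset] at hp
        exact hout p hp
      refine ⟨fun p => if u' p = u' a ∨ u' p = u' b then u' a else u' p, ?_, ?_, ?_, ?_, ?_⟩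
      · -- identity outside
        intro p hp
        dsimp only
        simp only [List.map_cons, List.mem_append, List.mem_cons, not_or] at hp
        obtain ⟨⟨hpa, hp1⟩, hpb, hp2⟩ := hp
        have hp' : p ∉ nms := by
          rw [hnms]; simp only [List.mem_append]; tauto
        have hup : u' p = p := hout p hp'
        have hua : u' a ≠ p := by
          intro hh
          by_cases ha : a ∈ nms
          · exact hp' (hh ▸ hin a ha)
          · rw [hout a ha] at hh; exact hpa hh.symm
        have hub : u' b ≠ p := by
          intro hh
          by_cases hb : b ∈ nms
          · exact hp' (hh ▸ hin b hb)
          · rw [hout b hb] at hh; exact hpb hh.symm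
        rw [if_neg, hup]
        rw [hup]
        push_neg
        exact ⟨fun h => hua h.symm, fun h => hub h.symm⟩
      · -- maps into names
        intro p hp
        dsimp only
        have hmem : ∀ q, q ∈ nms ∨ q = a ∨ q = b →
            q ∈ ((a, b) :: L).map Prod.fst ++ ((a, b) :: L).map Prod.snd := by
          intro q hq
          simp only [List.map_cons, List.mem_append, List.mem_cons]
          rw [hnms] at hq; simp only [List.mem_append] at hq
          tauto
        have huaN : u' a ∈ nms ∨ u' a = a := by
          by_cases ha : a ∈ nms
          · exact Or.inl (hin a ha)
          · exact Or.inr (hout a ha)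
        by_cases hcond : u' p = u' a ∨ u' p = u' b
        · rw [if_pos hcond]
          exact hmem _ (by tauto)
        · rw [if_neg hcond]
          by_cases hpn : p ∈ nms
          · exact hmem _ (Or.inl (hin p hpn))
          · rw [hout p hpn]
            exact hp
      · -- unifies
        intro q hq
        dsimp only
        simp only [List.mem_cons] at hq
        rcases hq with rfl | hq
        · rw [if_pos (Or.inl rfl), if_pos (Or.inr rfl)]
        · rw [hunif q hq]
      · -- F clause
        intro F hFpairs p
        dsimp only
        have hFa : F a = F b := hFpairs (a, b) List.mem_cons_self
        have hF' : ∀ q, F (u' q) = F q :=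
          hF F (fun q hq => hFpairs q (List.mem_cons_of_mem _ hq))
        by_cases hcond : u' p = u' a ∨ u' p = u' b
        · rw [if_pos hcond]
          rcases hcond with h | h
          · rw [← h, hF' p]
          · rw [hF' a, hFa, ← hF' b, ← h, hF' p]
        · rw [if_neg hcond]; exact hF' p
      · -- potential
        intro i
        dsimp only
        have hNset : (((a, b) :: L).map Prod.fst ++ ((a, b) :: L).map Prod.snd).toFinset
            = insert a (insert b N') := by
          rw [hN', hnms]
          ext x
          simp only [List.map_cons, List.toFinset_append, List.toFinset_cons,
            Finset.mem_union, Finset.mem_insert, List.mem_toFinset, List.mem_append]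
          tauto
        have hcnt : ∀ p, ((((a, b) :: L).map Prod.fst ++ ((a, b) :: L).map Prod.snd).count p : ℤ)
            = (nms.count p : ℤ) + (if p = a then 1 else 0) + (if p = b then 1 else 0) := by
          intro p
          rw [hnms]
          simp only [List.map_cons, List.count_append, List.count_cons, beq_iff_eq]
          push_cast
          split_ifs <;> omega
        rw [hNset]
        by_cases hia : i = u' a
        · -- the merged fiber
          subst hia
          set F := (insert a (insert b N')).filter
            (fun p => (if u' p = u' a ∨ u' p = u' b then u' a else u' p) = u' a) with hF2
          have hFmem : ∀ p, p ∈ F ↔ (p = a ∨ p = b ∨ p ∈ N') ∧ (u' p = u' a ∨ u' p = u' b) := by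
            intro p
            rw [hF2]
            simp only [Finset.mem_filter, Finset.mem_insert]
            constructor
            · rintro ⟨hp, heq⟩
              by_cases hc : u' p = u' a ∨ u' p = u' b
              · exact ⟨hp, hc⟩
              · rw [if_neg hc] at heq
                exact absurd (Or.inl heq) hc
            · rintro ⟨hp, hc⟩
              exact ⟨hp, by rw [if_pos hc]⟩
          have haF : a ∈ F := (hFmem a).mpr ⟨Or.inl rfl, Or.inl rfl⟩
          have hbF : b ∈ F := (hFmem b).mpr ⟨Or.inr (Or.inl rfl), Or.inr rfl⟩
          have hsplit : (∑ p ∈ F, ((2:ℤ) -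
              ((((a, b) :: L).map Prod.fst ++ ((a, b) :: L).map Prod.snd).count p : ℤ)))
              = (∑ p ∈ F, ((2:ℤ) - (nms.count p : ℤ)))
                - (∑ p ∈ F, (if p = a then (1:ℤ) else 0))
                - (∑ p ∈ F, (if p = b then (1:ℤ) else 0)) := by
            rw [← Finset.sum_sub_distrib, ← Finset.sum_sub_distrib]
            apply Finset.sum_congr rfl
            intro p _
            rw [hcnt p]
            ring
          have hia' : (∑ p ∈ F, (if p = a then (1:ℤ) else 0)) = 1 := by
            rw [Finset.sum_ite_eq' F a (fun _ => (1:ℤ)), if_pos haF]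
          have hib' : (∑ p ∈ F, (if p = b then (1:ℤ) else 0)) = 1 := by
            rw [Finset.sum_ite_eq' F b (fun _ => (1:ℤ)), if_pos hbF]
          set Fa := N'.filter (fun p => u' p = u' a) with hFa2
          set Fb := N'.filter (fun p => u' p = u' b) with hFb2
          set E := ({a, b} : Finset ℕ) \ N' with hE2
          have hFeq : F = (Fa ∪ Fb) ∪ E := by
            ext p
            rw [hFmem p]
            simp only [hFa2, hFb2, hE2, Finset.mem_union, Finset.mem_filter,
              Finset.mem_sdiff, Finset.mem_insert, Finset.mem_singleton]
            constructor
            · rintro ⟨hp, hc⟩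
              by_cases hpn : p ∈ N'
              · rcases hc with hc | hc
                · exact Or.inl (Or.inl ⟨hpn, hc⟩)
                · exact Or.inl (Or.inr ⟨hpn, hc⟩)
              · rcases hp with rfl | rfl | hp
                · exact Or.inr ⟨Or.inl rfl, hpn⟩
                · exact Or.inr ⟨Or.inr rfl, hpn⟩
                · exact absurd hp hpn
            · rintro ((⟨hp, hc⟩ | ⟨hp, hc⟩) | ⟨hp, hpn⟩)
              · exact ⟨Or.inr (Or.inr hp), Or.inl hc⟩
              · exact ⟨Or.inr (Or.inr hp), Or.inr hc⟩
              · rcases hp with rfl | rfl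
                · exact ⟨Or.inl rfl, Or.inl (by rw [houtN' p hpn])⟩
                · exact ⟨Or.inr (Or.inl rfl), Or.inr (by rw [houtN' p hpn])⟩
          have hdisj : Disjoint (Fa ∪ Fb) E := by
            rw [Finset.disjoint_left]
            intro p hp hpe
            rw [hE2, Finset.mem_sdiff] at hpe
            rcases Finset.mem_union.mp hp with h | h
            · exact hpe.2 (Finset.mem_filter.mp h).1
            · exact hpe.2 (Finset.mem_filter.mp h).1
          have hEsum : (∑ p ∈ E, ((2:ℤ) - (nms.count p : ℤ))) = 2 * E.card := by
            have : ∀ p ∈ E, ((2:ℤ) - (nms.count p : ℤ)) = 2 := by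
              intro p hp
              rw [hE2, Finset.mem_sdiff] at hp
              have : nms.count p = 0 := by
                rw [List.count_eq_zero]
                intro hmem
                exact hp.2 (by rw [hN']; exact List.mem_toFinset.mpr hmem)
              rw [this]
              norm_num
            rw [Finset.sum_congr rfl this, Finset.sum_const, nsmul_eq_mul]
            ring
          have hT : (∑ p ∈ F, ((2:ℤ) - (nms.count p : ℤ))) ≤ 4 := by
            rw [hFeq, Finset.sum_union hdisj, hEsum]
            by_cases ha : a ∈ N' <;> by_cases hb : b ∈ N'
            · -- both old
              have hE0 : E = ∅ := by
                rw [hE2, Finset.sdiff_eq_empty_iff_subset]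
                intro x hx
                rcases Finset.mem_insert.mp hx with rfl | hx
                · exact ha
                · rw [Finset.mem_singleton] at hx; exact hx ▸ hb
              rw [hE0]
              simp only [Finset.card_empty, Nat.cast_zero, mul_zero, add_zero]
              by_cases hab : u' a = u' b
              · have : Fa = Fb := by
                  rw [hFa2, hFb2]; ext x; simp [Finset.mem_filter, hab]
                rw [this, Finset.union_self]
                have h2 := hpot (u' b)
                rw [← hFb2] at h2
                omega
              · have hd : Disjoint Fa Fb := by
                  rw [Finset.disjoint_left]
                  intro p hp hp'
                  exact hab ((Finset.mem_filter.mp hp).2.symm.trans (Finset.mem_filter.mp hp').2)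
                rw [Finset.sum_union hd]
                have h1 := hpot (u' a)
                have h2 := hpot (u' b)
                rw [← hFa2] at h1
                rw [← hFb2] at h2
                omega
            · -- a old, b fresh
              have hFb0 : Fb = ∅ := by
                rw [hFb2, Finset.filter_eq_empty_iff]
                intro p hp he
                rw [houtN' b hb] at he
                exact hb (he ▸ hinN' p hp)
              have hEsub : E ⊆ {b} := by
                intro x hx
                rw [hE2, Finset.mem_sdiff] at hx
                rcases Finset.mem_insert.mp hx.1 with rfl | h
                · exact absurd ha hx.2
                · exact h
              have hcard : (E.card : ℤ) ≤ 1 := by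
                have := Finset.card_le_card hEsub
                simp at this
                exact_mod_cast this
              rw [hFb0, Finset.union_empty]
              have h1 := hpot (u' a)
              rw [← hFa2] at h1
              omega
            · -- a fresh, b old
              have hFa0 : Fa = ∅ := by
                rw [hFa2, Finset.filter_eq_empty_iff]
                intro p hp he
                rw [houtN' a ha] at he
                exact ha (he ▸ hinN' p hp)
              have hEsub : E ⊆ {a} := by
                intro x hx
                rw [hE2, Finset.mem_sdiff] at hx
                rcases Finset.mem_insert.mp hx.1 with rfl | h
                · exact Finset.mem_singleton_self x
                · rw [Finset.mem_singleton] at h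
                  subst h
                  exact absurd hb hx.2
              have hcard : (E.card : ℤ) ≤ 1 := by
                have := Finset.card_le_card hEsub
                simp at this
                exact_mod_cast this
              rw [hFa0, Finset.empty_union]
              have h1 := hpot (u' b)
              rw [← hFb2] at h1
              omega
            · -- both fresh
              have hFa0 : Fa = ∅ := by
                rw [hFa2, Finset.filter_eq_empty_iff]
                intro p hp he
                rw [houtN' a ha] at he
                exact ha (he ▸ hinN' p hp)
              have hFb0 : Fb = ∅ := by
                rw [hFb2, Finset.filter_eq_empty_iff]
                intro p hp he
                rw [houtN' b hb] at he
                exact hb (he ▸ hinN' p hp)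
              have hcard : (E.card : ℤ) ≤ 2 := by
                have := Finset.card_le_card (show E ⊆ {a, b} by
                  intro x hx; rw [hE2, Finset.mem_sdiff] at hx; exact hx.1)
                have h2 : ({a, b} : Finset ℕ).card ≤ 2 := Finset.card_insert_le a {b} |>.trans (by simp)
                have : E.card ≤ 2 := le_trans this h2
                exact_mod_cast this
              rw [hFa0, hFb0, Finset.union_empty]
              simp only [Finset.sum_empty]
              omega
          rw [hsplit, hia', hib']
          omega
        · by_cases hib : i = u' b
          · -- empty fiber
            have hempty : (insert a (insert b N')).filter
                (fun p => (if u' p = u' a ∨ u' p = u' b then u' a else u' p) = i) = ∅ := by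
              rw [Finset.filter_eq_empty_iff]
              intro p _ heq
              by_cases hc : u' p = u' a ∨ u' p = u' b
              · rw [if_pos hc] at heq
                exact hia heq.symm
              · rw [if_neg hc] at heq
                exact hc (Or.inr (heq.trans hib))
            rw [hempty]
            simp
          · -- untouched fiber
            have hfe : (insert a (insert b N')).filter
                (fun p => (if u' p = u' a ∨ u' p = u' b then u' a else u' p) = i)
                = N'.filter (fun p => u' p = i) := by
              ext p
              simp only [Finset.mem_filter, Finset.mem_insert]
              constructor
              · rintro ⟨hp, heq⟩
                by_cases hc : u' p = u' a ∨ u' p = u' b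
                · rw [if_pos hc] at heq
                  exact absurd heq.symm hia
                · rw [if_neg hc] at heq
                  push_neg at hc
                  refine ⟨?_, heq⟩
                  rcases hp with rfl | rfl | hp
                  · exact absurd heq (by rw [← heq] at hia; exact fun _ => hia rfl)
                  · exact absurd heq (by rw [← heq] at hib; exact fun _ => hib rfl)
                  · exact hp
              · rintro ⟨hp, heq⟩
                have hc : ¬(u' p = u' a ∨ u' p = u' b) := by
                  push_neg
                  constructor
                  · intro h
                    exact hia (h.symm.trans heq).symm
                  · intro h
                    exact hib (h.symm.trans heq).symm
                exact ⟨Or.inr (Or.inr hp), by rw [if_neg hc]; exact heq⟩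
            rw [hfe]
            have hco : ∀ p ∈ N'.filter (fun p => u' p = i),
                ((2:ℤ) - ((((a, b) :: L).map Prod.fst ++ ((a, b) :: L).map Prod.snd).count p : ℤ))
                = ((2:ℤ) - (nms.count p : ℤ)) := by
              intro p hp
              obtain ⟨hpN, hpu⟩ := Finset.mem_filter.mp hp
              have hpa : p ≠ a := by
                rintro rfl
                exact hia hpu.symm
              have hpb : p ≠ b := by
                rintro rfl
                exact hib hpu.symm
              rw [hcnt p, if_neg hpa, if_neg hpb]
              ring
            rw [Finset.sum_congr rfl hco]
            exact hpot i
theorem thinCut {G1 : IHedge} {A1 : ITy} {f1 : ℕ → ℕ}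
    {B2 : ITy} {f2 : ℕ → ℕ}
    {D : PCtx} {A : PTy} {Gp : PHedge} {B : PTy}
    (hp1 : IProv G1 A1) (hs1 : ∀ i, sigmaHedge i G1 + sigmaTy i A1 ≤ 2)
    (ht1 : ∀ i, tauHedge i G1 + tauTy i A1 ≤ 2)
    (heG1 : eraseHedge f1 G1 = Gp) (heA1 : eraseTy f1 A1 = A)
    (D2 : ICtx) (A2 : ITy)
    (hp2 : IProv (D2.plug [.leaf A2]) B2)
    (hs2 : ∀ i, sigmaHedge i (D2.plug [.leaf A2]) + sigmaTy i B2 ≤ 2)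
    (ht2 : ∀ i, tauHedge i (D2.plug [.leaf A2]) + tauTy i B2 ≤ 2)
    (heD2 : eraseCtx f2 D2 = D) (heA2 : eraseTy f2 A2 = A) (heB2 : eraseTy f2 B2 = B) :
    ∃ G' C' f, IProv G' C' ∧ (∀ i, sigmaHedge i G' + sigmaTy i C' ≤ 2) ∧
      (∀ i, tauHedge i G' + tauTy i C' ≤ 2) ∧
      eraseHedge f G' = D.plug Gp ∧ eraseTy f C' = B := by
  -- even/odd renamed premises
  have heA1' : eraseTy (comb f1 f2) (renTy gE gE A1) = A := by
    rw [eraseTy_ren, comb_gE, heA1]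
  have heA2' : eraseTy (comb f1 f2) (renTy gO gO A2) = A := by
    rw [eraseTy_ren, comb_gO, heA2]
  -- unifiers for primitive names and for indices
  obtain ⟨u, huout, huin, huunif, huF, hupot⟩ :=
    mgu ((primList (renTy gE gE A1)).zip (primList (renTy gO gO A2)))
  obtain ⟨v, hvout, hvin, hvunif, hvF, hvpot⟩ :=
    mgu ((idxList (renTy gE gE A1)).zip (idxList (renTy gO gO A2)))
  have hmapP : (primList (renTy gE gE A1)).map (comb f1 f2)
      = (primList (renTy gO gO A2)).map (comb f1 f2) := by
    rw [← primList_erase, ← primList_erase, heA1', heA2']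
  have hlenP : (primList (renTy gE gE A1)).length = (primList (renTy gO gO A2)).length := by
    simpa using congrArg List.length hmapP
  have hlenI : (idxList (renTy gE gE A1)).length = (idxList (renTy gO gO A2)).length := by
    rw [← idxLen_erase (comb f1 f2), ← idxLen_erase (comb f1 f2), heA1', heA2']
  have hfstP : (((primList (renTy gE gE A1)).zip (primList (renTy gO gO A2))).map Prod.fst)
      = primList (renTy gE gE A1) := List.map_fst_zip (le_of_eq hlenP)
  have hsndP : (((primList (renTy gE gE A1)).zip (primList (renTy gO gO A2))).map Prod.snd)
      = primList (renTy gO gO A2) := List.map_snd_zip (le_of_eq hlenP.symm)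
  have hfstI : (((idxList (renTy gE gE A1)).zip (idxList (renTy gO gO A2))).map Prod.fst)
      = idxList (renTy gE gE A1) := List.map_fst_zip (le_of_eq hlenI)
  have hsndI : (((idxList (renTy gE gE A1)).zip (idxList (renTy gO gO A2))).map Prod.snd)
      = idxList (renTy gO gO A2) := List.map_snd_zip (le_of_eq hlenI.symm)
  have hFpairs : ∀ pr ∈ (primList (renTy gE gE A1)).zip (primList (renTy gO gO A2)),
      comb f1 f2 pr.1 = comb f1 f2 pr.2 := zip_of_map_eq hmapP
  have hFu : (fun p => comb f1 f2 (u p)) = comb f1 f2 := funext (huF (comb f1 f2) hFpairs)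
  have hunify : renTy u v (renTy gE gE A1) = renTy u v (renTy gO gO A2) :=
    ren_unify u v _ _ (heA1'.trans heA2'.symm) huunif hvunif
  refine ⟨(renCtx u v (renCtx gO gO D2)).plug (renHedge u v (renHedge gE gE G1)),
    renTy u v (renTy gO gO B2), comb f1 f2, ?_, ?_, ?_, ?_, ?_⟩
  · -- provability, by an indexed cut on the unified cut formula
    refine IProv.cut _ _ (renTy u v (renTy gO gO A2)) _ ?_ ?_
    · rw [← hunify]
      exact IProv_ren u v (IProv_ren gE gE hp1)
    · have h2 := IProv_ren u v (IProv_ren gO gO hp2)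
      rw [renHedge_plug, renHedge_plug] at h2
      simpa [renHedge, renTree] using h2
  · -- sigma thinness
    intro i
    rw [sigmaHedge_plug]
    set nmsP := ((primList (renTy gE gE A1)).zip (primList (renTy gO gO A2))).map Prod.fst
      ++ ((primList (renTy gE gE A1)).zip (primList (renTy gO gO A2))).map Prod.snd with hnmsP
    set P : Finset ℕ := insert i nmsP.toFinset with hP2
    have hP : ∀ p, u p = i → p ∈ P := by
      intro p hp
      by_cases hn : p ∈ nmsP
      · exact Finset.mem_insert.mpr (Or.inr (List.mem_toFinset.mpr hn))
      · rw [huout p hn] at hp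
        exact Finset.mem_insert.mpr (Or.inl hp)
    have h1 := sigmaCtx_ren_sum u v i P hP (renCtx gO gO D2)
    have h2 := sigmaHedge_ren_sum u v i P hP (renHedge gE gE G1)
    have h3 := sigmaTy_ren_sum u v i P hP (renTy gO gO B2)
    have hterm : ∀ p, sigmaCtx p (renCtx gO gO D2) + sigmaHedge p (renHedge gE gE G1)
        + sigmaTy p (renTy gO gO B2) + (nmsP.count p) ≤ 2 := by
      intro p
      have hcnt : nmsP.count p = sigmaTy p (renTy gE gE A1) + sigmaTy p (renTy gO gO A2) := by
        rw [hnmsP, List.count_append, hfstP, hsndP, sigmaTy_eq_count, sigmaTy_eq_count]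
      rw [hcnt]
      rcases Nat.mod_two_eq_zero_or_one p with hp | hp
      · have z1 := sigmaCtx_ren_zero gO gO p (gO_zero hp) D2
        have z2 := sigmaTy_ren_zero gO gO p (gO_zero hp) B2
        have z3 := sigmaTy_ren_zero gO gO p (gO_zero hp) A2
        have l1 := sigmaHedge_ren_le gE gE p (p/2) (gE_le p) G1
        have l2 := sigmaTy_ren_le gE gE p (p/2) (gE_le p) A1
        have hb := hs1 (p/2)
        omega
      · have z1 := sigmaHedge_ren_zero gE gE p (gE_zero hp) G1
        have z2 := sigmaTy_ren_zero gE gE p (gE_zero hp) A1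
        have l1 := sigmaCtx_ren_le gO gO p (p/2) (gO_le p) D2
        have l2 := sigmaTy_ren_le gO gO p (p/2) (gO_le p) B2
        have l3 := sigmaTy_ren_le gO gO p (p/2) (gO_le p) A2
        have hb := hs2 (p/2)
        rw [sigmaHedge_plug] at hb
        simp only [sigmaHedge, sigmaTree, Nat.add_zero] at hb
        omega
    have hsumZ : (∑ p ∈ P.filter (fun p => u p = i),
        ((sigmaCtx p (renCtx gO gO D2) + sigmaHedge p (renHedge gE gE G1)
          + sigmaTy p (renTy gO gO B2) : ℕ) : ℤ)) ≤ 2 := by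
      have hstep : ∀ p ∈ P.filter (fun p => u p = i),
          ((sigmaCtx p (renCtx gO gO D2) + sigmaHedge p (renHedge gE gE G1)
            + sigmaTy p (renTy gO gO B2) : ℕ) : ℤ) ≤ (2 : ℤ) - (nmsP.count p : ℤ) := by
        intro p _
        have := hterm p
        push_cast
        omega
      calc (∑ p ∈ P.filter (fun p => u p = i), ((sigmaCtx p (renCtx gO gO D2)
            + sigmaHedge p (renHedge gE gE G1) + sigmaTy p (renTy gO gO B2) : ℕ) : ℤ))
          ≤ ∑ p ∈ P.filter (fun p => u p = i), ((2 : ℤ) - (nmsP.count p : ℤ)) :=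
            Finset.sum_le_sum hstep
        _ ≤ 2 := by
            by_cases hiN : i ∈ nmsP.toFinset
            · have : P = nmsP.toFinset := by
                rw [hP2, Finset.insert_eq_self.mpr hiN]
              rw [this]
              exact hupot i
            · have hfe : P.filter (fun p => u p = i) = {i} := by
                ext p
                simp only [Finset.mem_filter, hP2, Finset.mem_insert, Finset.mem_singleton]
                constructor
                · rintro ⟨hp | hp, hpu⟩
                  · exact hp
                  · exfalso
                    have := huin p (List.mem_toFinset.mp hp)
                    rw [hpu] at this
                    exact hiN (List.mem_toFinset.mpr this)
                · rintro rfl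
                  refine ⟨Or.inl rfl, ?_⟩
                  exact huout p (fun h => hiN (List.mem_toFinset.mpr h))
              rw [hfe]
              have : nmsP.count i = 0 :=
                List.count_eq_zero.mpr (fun h => hiN (List.mem_toFinset.mpr h))
              simp [this]
      
    have hsumN : (∑ p ∈ P.filter (fun p => u p = i),
        (sigmaCtx p (renCtx gO gO D2) + sigmaHedge p (renHedge gE gE G1)
          + sigmaTy p (renTy gO gO B2))) ≤ 2 := by
      exact_mod_cast hsumZ
    have hsplit : (∑ p ∈ P.filter (fun p => u p = i),
        (sigmaCtx p (renCtx gO gO D2) + sigmaHedge p (renHedge gE gE G1)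
          + sigmaTy p (renTy gO gO B2)))
        = (∑ p ∈ P.filter (fun p => u p = i), sigmaCtx p (renCtx gO gO D2))
          + (∑ p ∈ P.filter (fun p => u p = i), sigmaHedge p (renHedge gE gE G1))
          + (∑ p ∈ P.filter (fun p => u p = i), sigmaTy p (renTy gO gO B2)) := by
      rw [← Finset.sum_add_distrib, ← Finset.sum_add_distrib]
    omega
  · -- tau thinness
    intro i
    rw [tauHedge_plug]
    set nmsI := ((idxList (renTy gE gE A1)).zip (idxList (renTy gO gO A2))).map Prod.fst
      ++ ((idxList (renTy gE gE A1)).zip (idxList (renTy gO gO A2))).map Prod.snd with hnmsI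
    set P : Finset ℕ := insert i nmsI.toFinset with hP2
    have hP : ∀ p, v p = i → p ∈ P := by
      intro p hp
      by_cases hn : p ∈ nmsI
      · exact Finset.mem_insert.mpr (Or.inr (List.mem_toFinset.mpr hn))
      · rw [hvout p hn] at hp
        exact Finset.mem_insert.mpr (Or.inl hp)
    have h1 := tauCtx_ren_sum u v i P hP (renCtx gO gO D2)
    have h2 := tauHedge_ren_sum u v i P hP (renHedge gE gE G1)
    have h3 := tauTy_ren_sum u v i P hP (renTy gO gO B2)
    have hterm : ∀ p, tauCtx p (renCtx gO gO D2) + tauHedge p (renHedge gE gE G1)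
        + tauTy p (renTy gO gO B2) + (nmsI.count p) ≤ 2 := by
      intro p
      have hcnt : nmsI.count p = tauTy p (renTy gE gE A1) + tauTy p (renTy gO gO A2) := by
        rw [hnmsI, List.count_append, hfstI, hsndI, tauTy_eq_count, tauTy_eq_count]
      rw [hcnt]
      rcases Nat.mod_two_eq_zero_or_one p with hp | hp
      · have z1 := tauCtx_ren_zero gO gO p (gO_zero hp) D2
        have z2 := tauTy_ren_zero gO gO p (gO_zero hp) B2
        have z3 := tauTy_ren_zero gO gO p (gO_zero hp) A2
        have l1 := tauHedge_ren_le gE gE p (p/2) (gE_le p) G1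
        have l2 := tauTy_ren_le gE gE p (p/2) (gE_le p) A1
        have hb := ht1 (p/2)
        omega
      · have z1 := tauHedge_ren_zero gE gE p (gE_zero hp) G1
        have z2 := tauTy_ren_zero gE gE p (gE_zero hp) A1
        have l1 := tauCtx_ren_le gO gO p (p/2) (gO_le p) D2
        have l2 := tauTy_ren_le gO gO p (p/2) (gO_le p) B2
        have l3 := tauTy_ren_le gO gO p (p/2) (gO_le p) A2
        have hb := ht2 (p/2)
        rw [tauHedge_plug] at hb
        simp only [tauHedge, tauTree, Nat.add_zero] at hb
        omega
    have hsumZ : (∑ p ∈ P.filter (fun p => v p = i),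
        ((tauCtx p (renCtx gO gO D2) + tauHedge p (renHedge gE gE G1)
          + tauTy p (renTy gO gO B2) : ℕ) : ℤ)) ≤ 2 := by
      have hstep : ∀ p ∈ P.filter (fun p => v p = i),
          ((tauCtx p (renCtx gO gO D2) + tauHedge p (renHedge gE gE G1)
            + tauTy p (renTy gO gO B2) : ℕ) : ℤ) ≤ (2 : ℤ) - (nmsI.count p : ℤ) := by
        intro p _
        have := hterm p
        push_cast
        omega
      calc (∑ p ∈ P.filter (fun p => v p = i), ((tauCtx p (renCtx gO gO D2)
            + tauHedge p (renHedge gE gE G1) + tauTy p (renTy gO gO B2) : ℕ) : ℤ))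
          ≤ ∑ p ∈ P.filter (fun p => v p = i), ((2 : ℤ) - (nmsI.count p : ℤ)) :=
            Finset.sum_le_sum hstep
        _ ≤ 2 := by
            by_cases hiN : i ∈ nmsI.toFinset
            · have : P = nmsI.toFinset := by
                rw [hP2, Finset.insert_eq_self.mpr hiN]
              rw [this]
              exact hvpot i
            · have hfe : P.filter (fun p => v p = i) = {i} := by
                ext p
                simp only [Finset.mem_filter, hP2, Finset.mem_insert, Finset.mem_singleton]
                constructor
                · rintro ⟨hp | hp, hpu⟩
                  · exact hp
                  · exfalso
                    have := hvin p (List.mem_toFinset.mp hp)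
                    rw [hpu] at this
                    exact hiN (List.mem_toFinset.mpr this)
                · rintro rfl
                  refine ⟨Or.inl rfl, ?_⟩
                  exact hvout p (fun h => hiN (List.mem_toFinset.mpr h))
              rw [hfe]
              have : nmsI.count i = 0 :=
                List.count_eq_zero.mpr (fun h => hiN (List.mem_toFinset.mpr h))
              simp [this]
    have hsumN : (∑ p ∈ P.filter (fun p => v p = i),
        (tauCtx p (renCtx gO gO D2) + tauHedge p (renHedge gE gE G1)
          + tauTy p (renTy gO gO B2))) ≤ 2 := by
      exact_mod_cast hsumZ
    have hsplit : (∑ p ∈ P.filter (fun p => v p = i),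
        (tauCtx p (renCtx gO gO D2) + tauHedge p (renHedge gE gE G1)
          + tauTy p (renTy gO gO B2)))
        = (∑ p ∈ P.filter (fun p => v p = i), tauCtx p (renCtx gO gO D2))
          + (∑ p ∈ P.filter (fun p => v p = i), tauHedge p (renHedge gE gE G1))
          + (∑ p ∈ P.filter (fun p => v p = i), tauTy p (renTy gO gO B2)) := by
      rw [← Finset.sum_add_distrib, ← Finset.sum_add_distrib]
    omega
  · -- erasure of the antecedent
    rw [eraseHedge_plug, eraseCtx_ren, eraseHedge_ren, hFu, eraseCtx_ren, eraseHedge_ren,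
      comb_gO, comb_gE, heD2, heG1]
  · -- erasure of the succedent
    rw [eraseTy_ren, hFu, eraseTy_ren, comb_gO, heB2]
/-- Every L◇-provable sequent is a substitution instance of a thin indexed sequent
provable in the multimodal calculus L◇_m. -/
theorem substitution_instance_of_thin_indexed (G : PHedge) (C : PTy) (h : PProv G C) :
    ∃ (G' : IHedge) (C' : ITy) (f : ℕ → ℕ),
      IProv G' C' ∧
      (∀ i, sigmaHedge i G' + sigmaTy i C' ≤ 2) ∧
      (∀ i, tauHedge i G' + tauTy i C' ≤ 2) ∧
      eraseHedge f G' = G ∧ eraseTy f C' = C := by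
  induction h with
  | id p =>
      refine ⟨[.leaf (.prim 0)], .prim 0, fun _ => p, IProv.id 0, ?_, ?_, ?_, ?_⟩
      · intro i; simp [sigmaHedge, sigmaTree, sigmaTy]; split <;> omega
      · intro i; simp [tauHedge, tauTree, tauTy]
      · simp [eraseHedge, eraseTree, eraseTy]
      · simp [eraseTy]
  | ldivL Gq Dq Aq Bq Cq hG hD ih1 ih2 =>
      obtain ⟨G1, A1, f1, hp1, hs1, ht1, heG1, heA1⟩ := ih1
      obtain ⟨H2, C2, f2, hp2, hs2, ht2, heH2, heC2⟩ := ih2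
      obtain ⟨D2, X2, rfl, heD2, heX2⟩ := eraseHedge_eq_plug heH2
      obtain ⟨t2, X2', rfl, htB, hX2'⟩ := eraseHedge_eq_cons heX2
      obtain ⟨B2, rfl, heB2⟩ := eraseTree_eq_leaf htB
      obtain rfl := eraseHedge_eq_nil hX2'
      refine ⟨(renCtx gO gO D2).plug (renHedge gE gE G1 ++
          [.leaf (.ldiv (renTy gE gE A1) (renTy gO gO B2))]),
        renTy gO gO C2, comb f1 f2, ?_, ?_, ?_, ?_, ?_⟩
      · refine IProv.ldivL _ _ _ _ _ (IProv_ren gE gE hp1) ?_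
        have h2 := IProv_ren gO gO hp2
        rw [renHedge_plug] at h2
        simpa [renHedge, renTree] using h2
      · intro i
        rw [sigmaHedge_plug, sigmaHedge_append]
        simp only [sigmaHedge, sigmaTree, sigmaTy, Nat.add_zero]
        rcases Nat.mod_two_eq_zero_or_one i with hi | hi
        · have h1 := sigmaHedge_ren_le gE gE i (i/2) (gE_le i) G1
          have h2 := sigmaTy_ren_le gE gE i (i/2) (gE_le i) A1
          have h3 := sigmaCtx_ren_zero gO gO i (gO_zero hi) D2
          have h4 := sigmaTy_ren_zero gO gO i (gO_zero hi) B2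
          have h5 := sigmaTy_ren_zero gO gO i (gO_zero hi) C2
          have h6 := hs1 (i/2)
          omega
        · have h1 := sigmaHedge_ren_zero gE gE i (gE_zero hi) G1
          have h2 := sigmaTy_ren_zero gE gE i (gE_zero hi) A1
          have h3 := sigmaCtx_ren_le gO gO i (i/2) (gO_le i) D2
          have h4 := sigmaTy_ren_le gO gO i (i/2) (gO_le i) B2
          have h5 := sigmaTy_ren_le gO gO i (i/2) (gO_le i) C2
          have h6 := hs2 (i/2)
          rw [sigmaHedge_plug] at h6
          simp only [sigmaHedge, sigmaTree, Nat.add_zero] at h6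
          omega
      · intro i
        rw [tauHedge_plug, tauHedge_append]
        simp only [tauHedge, tauTree, tauTy, Nat.add_zero]
        rcases Nat.mod_two_eq_zero_or_one i with hi | hi
        · have h1 := tauHedge_ren_le gE gE i (i/2) (gE_le i) G1
          have h2 := tauTy_ren_le gE gE i (i/2) (gE_le i) A1
          have h3 := tauCtx_ren_zero gO gO i (gO_zero hi) D2
          have h4 := tauTy_ren_zero gO gO i (gO_zero hi) B2
          have h5 := tauTy_ren_zero gO gO i (gO_zero hi) C2
          have h6 := ht1 (i/2)
          omega
        · have h1 := tauHedge_ren_zero gE gE i (gE_zero hi) G1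
          have h2 := tauTy_ren_zero gE gE i (gE_zero hi) A1
          have h3 := tauCtx_ren_le gO gO i (i/2) (gO_le i) D2
          have h4 := tauTy_ren_le gO gO i (i/2) (gO_le i) B2
          have h5 := tauTy_ren_le gO gO i (i/2) (gO_le i) C2
          have h6 := ht2 (i/2)
          rw [tauHedge_plug] at h6
          simp only [tauHedge, tauTree, Nat.add_zero] at h6
          omega
      · rw [eraseHedge_plug, eraseHedge_append]
        simp only [eraseHedge, eraseTree, eraseTy]
        rw [eraseCtx_ren, eraseHedge_ren, eraseTy_ren, eraseTy_ren,
          comb_gE, comb_gO, heD2, heG1, heA1, heB2]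
      · rw [eraseTy_ren, comb_gO]; exact heC2
  | ldivR Pi Aq Bq hne hprem ih =>
      obtain ⟨H1, B1, f1, hp1, hs1, ht1, heH1, heB1⟩ := ih
      obtain ⟨t1, Pi1, rfl, htA, hPi⟩ := eraseHedge_eq_cons heH1
      obtain ⟨A1, rfl, heA1⟩ := eraseTree_eq_leaf htA
      refine ⟨Pi1, .ldiv A1 B1, f1, IProv.ldivR _ _ _ ?_ hp1, ?_, ?_, hPi, ?_⟩
      · intro hh; apply hne; rw [hh] at hPi; exact hPi.symm
      · intro i; have := hs1 i
        simp only [sigmaHedge, sigmaTree, sigmaTy] at this ⊢; omega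
      · intro i; have := ht1 i
        simp only [tauHedge, tauTree, tauTy] at this ⊢; omega
      · simp [eraseTy, heA1, heB1]
  | rdivL Gq Dq Aq Bq Cq hG hD ih1 ih2 =>
      obtain ⟨G1, A1, f1, hp1, hs1, ht1, heG1, heA1⟩ := ih1
      obtain ⟨H2, C2, f2, hp2, hs2, ht2, heH2, heC2⟩ := ih2
      obtain ⟨D2, X2, rfl, heD2, heX2⟩ := eraseHedge_eq_plug heH2
      obtain ⟨t2, X2', rfl, htB, hX2'⟩ := eraseHedge_eq_cons heX2
      obtain ⟨B2, rfl, heB2⟩ := eraseTree_eq_leaf htB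
      obtain rfl := eraseHedge_eq_nil hX2'
      refine ⟨(renCtx gO gO D2).plug (.leaf (.rdiv (renTy gO gO B2) (renTy gE gE A1)) ::
          renHedge gE gE G1),
        renTy gO gO C2, comb f1 f2, ?_, ?_, ?_, ?_, ?_⟩
      · refine IProv.rdivL _ _ _ _ _ (IProv_ren gE gE hp1) ?_
        have h2 := IProv_ren gO gO hp2
        rw [renHedge_plug] at h2
        simpa [renHedge, renTree] using h2
      · intro i
        rw [sigmaHedge_plug]
        simp only [sigmaHedge, sigmaTree, sigmaTy, Nat.add_zero]
        rcases Nat.mod_two_eq_zero_or_one i with hi | hi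
        · have h1 := sigmaHedge_ren_le gE gE i (i/2) (gE_le i) G1
          have h2 := sigmaTy_ren_le gE gE i (i/2) (gE_le i) A1
          have h3 := sigmaCtx_ren_zero gO gO i (gO_zero hi) D2
          have h4 := sigmaTy_ren_zero gO gO i (gO_zero hi) B2
          have h5 := sigmaTy_ren_zero gO gO i (gO_zero hi) C2
          have h6 := hs1 (i/2)
          omega
        · have h1 := sigmaHedge_ren_zero gE gE i (gE_zero hi) G1
          have h2 := sigmaTy_ren_zero gE gE i (gE_zero hi) A1
          have h3 := sigmaCtx_ren_le gO gO i (i/2) (gO_le i) D2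
          have h4 := sigmaTy_ren_le gO gO i (i/2) (gO_le i) B2
          have h5 := sigmaTy_ren_le gO gO i (i/2) (gO_le i) C2
          have h6 := hs2 (i/2)
          rw [sigmaHedge_plug] at h6
          simp only [sigmaHedge, sigmaTree, Nat.add_zero] at h6
          omega
      · intro i
        rw [tauHedge_plug]
        simp only [tauHedge, tauTree, tauTy, Nat.add_zero]
        rcases Nat.mod_two_eq_zero_or_one i with hi | hi
        · have h1 := tauHedge_ren_le gE gE i (i/2) (gE_le i) G1
          have h2 := tauTy_ren_le gE gE i (i/2) (gE_le i) A1
          have h3 := tauCtx_ren_zero gO gO i (gO_zero hi) D2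
          have h4 := tauTy_ren_zero gO gO i (gO_zero hi) B2
          have h5 := tauTy_ren_zero gO gO i (gO_zero hi) C2
          have h6 := ht1 (i/2)
          omega
        · have h1 := tauHedge_ren_zero gE gE i (gE_zero hi) G1
          have h2 := tauTy_ren_zero gE gE i (gE_zero hi) A1
          have h3 := tauCtx_ren_le gO gO i (i/2) (gO_le i) D2
          have h4 := tauTy_ren_le gO gO i (i/2) (gO_le i) B2
          have h5 := tauTy_ren_le gO gO i (i/2) (gO_le i) C2
          have h6 := ht2 (i/2)
          rw [tauHedge_plug] at h6
          simp only [tauHedge, tauTree, Nat.add_zero] at h6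
          omega
      · rw [eraseHedge_plug]
        simp only [eraseHedge, eraseTree, eraseTy]
        rw [eraseCtx_ren, eraseHedge_ren, eraseTy_ren, eraseTy_ren,
          comb_gE, comb_gO, heD2, heG1, heA1, heB2]
      · rw [eraseTy_ren, comb_gO]; exact heC2
  | rdivR Pi Aq Bq hne hprem ih =>
      obtain ⟨H1, B1, f1, hp1, hs1, ht1, heH1, heB1⟩ := ih
      obtain ⟨Pi1, H2, rfl, hPi, hA⟩ := eraseHedge_eq_append heH1
      obtain ⟨t1, H3, rfl, htA, h3⟩ := eraseHedge_eq_cons hA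
      obtain ⟨A1, rfl, heA1⟩ := eraseTree_eq_leaf htA
      obtain rfl := eraseHedge_eq_nil h3
      refine ⟨Pi1, .rdiv B1 A1, f1, IProv.rdivR _ _ _ ?_ hp1, ?_, ?_, hPi, ?_⟩
      · intro hh; apply hne; rw [hh] at hPi; exact hPi.symm
      · intro i; have := hs1 i
        rw [sigmaHedge_append] at this
        simp only [sigmaHedge, sigmaTree, sigmaTy] at this ⊢; omega
      · intro i; have := ht1 i
        rw [tauHedge_append] at this
        simp only [tauHedge, tauTree, tauTy] at this ⊢; omega
      · simp [eraseTy, heA1, heB1]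
  | mulL Gq Aq Bq Cq hprem ih =>
      obtain ⟨H1, C1, f1, hp1, hs1, ht1, heH1, heC1⟩ := ih
      obtain ⟨D1, X1, rfl, heD1, heX1⟩ := eraseHedge_eq_plug heH1
      obtain ⟨t1, X2, rfl, htA, hX2⟩ := eraseHedge_eq_cons heX1
      obtain ⟨A1, rfl, heA1⟩ := eraseTree_eq_leaf htA
      obtain ⟨t2, X3, rfl, htB, hX3⟩ := eraseHedge_eq_cons hX2
      obtain ⟨B1, rfl, heB1⟩ := eraseTree_eq_leaf htB
      obtain rfl := eraseHedge_eq_nil hX3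
      refine ⟨D1.plug [.leaf (.mul A1 B1)], C1, f1, IProv.mulL _ _ _ _ hp1, ?_, ?_, ?_, heC1⟩
      · intro i; have := hs1 i
        rw [sigmaHedge_plug] at this ⊢
        simp only [sigmaHedge, sigmaTree, sigmaTy] at this ⊢; omega
      · intro i; have := ht1 i
        rw [tauHedge_plug] at this ⊢
        simp only [tauHedge, tauTree, tauTy] at this ⊢; omega
      · rw [eraseHedge_plug, heD1]
        simp [eraseHedge, eraseTree, eraseTy, heA1, heB1]
  | mulR Gq Dq Aq Bq hG hD ih1 ih2 =>
      obtain ⟨G1, A1, f1, hp1, hs1, ht1, heG1, heA1⟩ := ih1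
      obtain ⟨G2, B2, f2, hp2, hs2, ht2, heG2, heB2⟩ := ih2
      refine ⟨renHedge gE gE G1 ++ renHedge gO gO G2,
        .mul (renTy gE gE A1) (renTy gO gO B2), comb f1 f2,
        IProv.mulR _ _ _ _ (IProv_ren gE gE hp1) (IProv_ren gO gO hp2), ?_, ?_, ?_, ?_⟩
      · intro i
        rw [sigmaHedge_append]
        simp only [sigmaTy]
        rcases Nat.mod_two_eq_zero_or_one i with hi | hi
        · have h1 := sigmaHedge_ren_le gE gE i (i/2) (gE_le i) G1
          have h2 := sigmaTy_ren_le gE gE i (i/2) (gE_le i) A1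
          have h3 := sigmaHedge_ren_zero gO gO i (gO_zero hi) G2
          have h4 := sigmaTy_ren_zero gO gO i (gO_zero hi) B2
          have h6 := hs1 (i/2)
          omega
        · have h1 := sigmaHedge_ren_zero gE gE i (gE_zero hi) G1
          have h2 := sigmaTy_ren_zero gE gE i (gE_zero hi) A1
          have h3 := sigmaHedge_ren_le gO gO i (i/2) (gO_le i) G2
          have h4 := sigmaTy_ren_le gO gO i (i/2) (gO_le i) B2
          have h6 := hs2 (i/2)
          omega
      · intro i
        rw [tauHedge_append]
        simp only [tauTy]
        rcases Nat.mod_two_eq_zero_or_one i with hi | hi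
        · have h1 := tauHedge_ren_le gE gE i (i/2) (gE_le i) G1
          have h2 := tauTy_ren_le gE gE i (i/2) (gE_le i) A1
          have h3 := tauHedge_ren_zero gO gO i (gO_zero hi) G2
          have h4 := tauTy_ren_zero gO gO i (gO_zero hi) B2
          have h6 := ht1 (i/2)
          omega
        · have h1 := tauHedge_ren_zero gE gE i (gE_zero hi) G1
          have h2 := tauTy_ren_zero gE gE i (gE_zero hi) A1
          have h3 := tauHedge_ren_le gO gO i (i/2) (gO_le i) G2
          have h4 := tauTy_ren_le gO gO i (i/2) (gO_le i) B2
          have h6 := ht2 (i/2)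
          omega
      · rw [eraseHedge_append, eraseHedge_ren, eraseHedge_ren, comb_gE, comb_gO, heG1, heG2]
      · simp only [eraseTy]
        rw [eraseTy_ren, eraseTy_ren, comb_gE, comb_gO, heA1, heB2]
  | diaL Gq Aq Bq hprem ih =>
      obtain ⟨H1, C1, f1, hp1, hs1, ht1, heH1, heC1⟩ := ih
      obtain ⟨D1, X1, rfl, heD1, heX1⟩ := eraseHedge_eq_plug heH1
      obtain ⟨t1, X2, rfl, htA, hX2⟩ := eraseHedge_eq_cons heX1
      obtain ⟨k, ts1, rfl, hts⟩ := eraseTree_eq_node htA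
      obtain rfl := eraseHedge_eq_nil hX2
      obtain ⟨t2, X3, rfl, htA2, hX3⟩ := eraseHedge_eq_cons hts
      obtain ⟨A1, rfl, heA1⟩ := eraseTree_eq_leaf htA2
      obtain rfl := eraseHedge_eq_nil hX3
      refine ⟨D1.plug [.leaf (.dia k A1)], C1, f1, IProv.diaL _ _ _ _ hp1, ?_, ?_, ?_, heC1⟩
      · intro i; have := hs1 i
        rw [sigmaHedge_plug] at this ⊢
        simp only [sigmaHedge, sigmaTree, sigmaTy] at this ⊢; omega
      · intro i; have := ht1 i
        rw [tauHedge_plug] at this ⊢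
        simp only [tauHedge, tauTree, tauTy] at this ⊢; omega
      · rw [eraseHedge_plug, heD1]
        simp [eraseHedge, eraseTree, eraseTy, heA1]
  | diaR Gq Aq hprem ih =>
      obtain ⟨G1, A1, f1, hp1, hs1, ht1, heG1, heA1⟩ := ih
      refine ⟨[.node 0 (renHedge id gS G1)], .dia 0 (renTy id gS A1), f1,
        IProv.diaR _ _ _ (IProv_ren id gS hp1), ?_, ?_, ?_, ?_⟩
      · intro i
        have h1 := sigmaHedge_ren_le id gS i i (fun k hk => hk) G1
        have h2 := sigmaTy_ren_le id gS i i (fun k hk => hk) A1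
        have h6 := hs1 i
        simp only [sigmaHedge, sigmaTree, sigmaTy] at *; omega
      · intro i
        cases i with
        | zero =>
            have h1 := tauHedge_ren_zero id gS 0 gS_zero G1
            have h2 := tauTy_ren_zero id gS 0 gS_zero A1
            simp only [tauHedge, tauTree, tauTy, h1, h2]; norm_num
        | succ j =>
            have h1 := tauHedge_ren_le id gS (j+1) j (gS_le' j) G1
            have h2 := tauTy_ren_le id gS (j+1) j (gS_le' j) A1
            have h6 := ht1 j
            simp only [tauHedge, tauTree, tauTy]
            have : (if (0:ℕ) = j + 1 then 1 else 0) = 0 := by simp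
            omega
      · simp only [eraseHedge, eraseTree]
        rw [eraseHedge_ren]
        have : eraseHedge (fun p => f1 (id p)) G1 = Gq := heG1
        rw [this]
      · simp only [eraseTy]
        rw [eraseTy_ren]
        have : eraseTy (fun p => f1 (id p)) A1 = Aq := heA1
        rw [this]
  | boxL Gq Aq Bq hprem ih =>
      obtain ⟨H1, C1, f1, hp1, hs1, ht1, heH1, heC1⟩ := ih
      obtain ⟨D1, X1, rfl, heD1, heX1⟩ := eraseHedge_eq_plug heH1
      obtain ⟨t1, X2, rfl, htA, hX2⟩ := eraseHedge_eq_cons heX1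
      obtain ⟨A1, rfl, heA1⟩ := eraseTree_eq_leaf htA
      obtain rfl := eraseHedge_eq_nil hX2
      refine ⟨(renCtx id gS D1).plug [.node 0 [.leaf (.box 0 (renTy id gS A1))]],
        renTy id gS C1, f1, ?_, ?_, ?_, ?_, ?_⟩
      · refine IProv.boxL _ _ _ _ ?_
        have h2 := IProv_ren id gS hp1
        rw [renHedge_plug] at h2
        simpa [renHedge, renTree] using h2
      · intro i
        have h1 := sigmaCtx_ren_le id gS i i (fun k hk => hk) D1
        have h2 := sigmaTy_ren_le id gS i i (fun k hk => hk) A1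
        have h3 := sigmaTy_ren_le id gS i i (fun k hk => hk) C1
        have h6 := hs1 i
        rw [sigmaHedge_plug] at h6 ⊢
        simp only [sigmaHedge, sigmaTree, sigmaTy] at *; omega
      · intro i
        rw [tauHedge_plug]
        cases i with
        | zero =>
            have h1 := tauCtx_ren_zero id gS 0 gS_zero D1
            have h2 := tauTy_ren_zero id gS 0 gS_zero A1
            have h3 := tauTy_ren_zero id gS 0 gS_zero C1
            simp only [tauHedge, tauTree, tauTy, h1, h2, h3]; norm_num
        | succ j =>
            have h1 := tauCtx_ren_le id gS (j+1) j (gS_le' j) D1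
            have h2 := tauTy_ren_le id gS (j+1) j (gS_le' j) A1
            have h3 := tauTy_ren_le id gS (j+1) j (gS_le' j) C1
            have h6 := ht1 j
            rw [tauHedge_plug] at h6
            simp only [tauHedge, tauTree, tauTy] at h6 ⊢
            have : (if (0:ℕ) = j + 1 then 1 else 0) = 0 := by simp
            omega
      · rw [eraseHedge_plug, eraseCtx_ren]
        have hD : eraseCtx (fun p => f1 (id p)) D1 = Gq := heD1
        rw [hD]
        simp only [eraseHedge, eraseTree, eraseTy]
        rw [eraseTy_ren]
        have hA : eraseTy (fun p => f1 (id p)) A1 = Aq := heA1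
        rw [hA]
      · rw [eraseTy_ren]
        exact heC1
  | boxR Gq Aq hprem ih =>
      obtain ⟨H1, A1, f1, hp1, hs1, ht1, heH1, heA1⟩ := ih
      obtain ⟨t1, X2, rfl, htA, hX2⟩ := eraseHedge_eq_cons heH1
      obtain ⟨k, G1, rfl, hts⟩ := eraseTree_eq_node htA
      obtain rfl := eraseHedge_eq_nil hX2
      refine ⟨G1, .box k A1, f1, IProv.boxR _ _ _ hp1, ?_, ?_, hts, ?_⟩
      · intro i; have := hs1 i
        simp only [sigmaHedge, sigmaTree, sigmaTy] at this ⊢; omega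
      · intro i; have := ht1 i
        simp only [tauHedge, tauTree, tauTy] at this ⊢; omega
      · simp [eraseTy, heA1]
  | cut Gq Dq Aq Bq hG hD ih1 ih2 =>
      obtain ⟨G1, A1, f1, hp1, hs1, ht1, heG1, heA1⟩ := ih1
      obtain ⟨H2, B2, f2, hp2, hs2, ht2, heH2, heB2⟩ := ih2
      obtain ⟨D2, X2, rfl, heD2, heX2⟩ := eraseHedge_eq_plug heH2
      obtain ⟨t2, X2', rfl, htA, hX2'⟩ := eraseHedge_eq_cons heX2
      obtain ⟨A2, rfl, heA2⟩ := eraseTree_eq_leaf htA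
      obtain rfl := eraseHedge_eq_nil hX2'
      exact thinCut hp1 hs1 ht1 heG1 heA1 D2 A2 hp2 hs2 ht2 heD2 heA2 heB2
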